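/- arXiv:1612.09390 — 7 statements merged into one kernel-verified Lean document; each statement's English description precedes it below -/
import Mathlib

section
/- Let C be an [n,k] linear code over F_p and let 1 ≤ r ≤ k. Then the r-th generalized Hamming weight satisfies the Singleton-type bound: r ≤ d_r(C) ≤ n - k + r. -/
open scoped Classical in
/-- The `r`-th generalized Hamming weight of a linear code `C ≤ F_p^ι`. -/
noncomputable def ghw {p : ℕ} {ι : Type} [Fintype ι]
    (C : Submodule (ZMod p) (ι → ZMod p)) (r : ℕ) : ℕ :=
  sInf {k | ∃ U : Submodule (ZMod p) (ι → ZMod p), U ≤ C ∧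
    Module.finrank (ZMod p) ↥U = r ∧
    (Finset.univ.filter (fun i : ι => ∃ x ∈ U, x i ≠ 0)).card = k}

open scoped Classical in
lemma ghw_support_card_ge {p : ℕ} [Fact p.Prime] {ι : Type} [Fintype ι]
    (U : Submodule (ZMod p) (ι → ZMod p))
    (inst : DecidablePred fun i : ι => ∃ x ∈ U, x i ≠ 0) :
    Module.finrank (ZMod p) ↥U ≤
      (@Finset.filter ι (fun i : ι => ∃ x ∈ U, x i ≠ 0) inst Finset.univ).card := by
  set S := @Finset.filter ι (fun i : ι => ∃ x ∈ U, x i ≠ 0) inst Finset.univ with hS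
  let f : ↥U →ₗ[ZMod p] (↥S → ZMod p) :=
    { toFun := fun x i => (x : ι → ZMod p) i
      map_add' := by intros; rfl
      map_smul' := by intros; rfl }
  have hinj : Function.Injective f := by
    rw [← LinearMap.ker_eq_bot]
    ext x
    simp only [LinearMap.mem_ker, Submodule.mem_bot]
    constructor
    · intro hx
      ext i
      by_cases hi : i ∈ S
      · exact congrFun hx ⟨i, hi⟩
      · simp only [hS, Finset.mem_filter, Finset.mem_univ, true_and, not_exists] at hi
        push_neg at hi
        simpa using hi x.1 x.2
    · rintro rfl; rfl
  calc Module.finrank (ZMod p) ↥U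
      ≤ Module.finrank (ZMod p) (↥S → ZMod p) :=
        LinearMap.finrank_le_finrank_of_injective hinj
    _ = S.card := by
        rw [Module.finrank_fintype_fun_eq_card, Fintype.card_coe]

/-- Singleton-type bound for generalized Hamming weights. -/
theorem stmt0 (p n k r : ℕ) [Fact p.Prime]
    (C : Submodule (ZMod p) (Fin n → ZMod p))
    (hk : Module.finrank (ZMod p) ↥C = k)
    (hr1 : 1 ≤ r) (hrk : r ≤ k) :
    r ≤ ghw C r ∧ ghw C r ≤ n - k + r := by
  have hkn : k ≤ n := by
    rw [← hk]
    simpa using Submodule.finrank_le C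
  -- choose J of size k - r
  obtain ⟨J, hJcard⟩ : ∃ J : Finset (Fin n), J.card = k - r :=
    ⟨(Finset.univ : Finset (Fin n)).exists_subset_card_eq (by simpa using (by omega : k - r ≤ n)) |>.choose,
     ((Finset.univ : Finset (Fin n)).exists_subset_card_eq (by simpa using (by omega : k - r ≤ n))).choose_spec.2⟩
  -- restriction map to coordinates in J
  let g : ↥C →ₗ[ZMod p] (↥J → ZMod p) :=
    { toFun := fun x j => (x : Fin n → ZMod p) j
      map_add' := by intros; rfl
      map_smul' := by intros; rfl }
  have hker : r ≤ Module.finrank (ZMod p) ↥(LinearMap.ker g) := by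
    have h1 := LinearMap.finrank_range_add_finrank_ker g
    have h2 : Module.finrank (ZMod p) ↥(LinearMap.range g)
        ≤ Module.finrank (ZMod p) (↥J → ZMod p) := Submodule.finrank_le _
    rw [Module.finrank_fintype_fun_eq_card, Fintype.card_coe, hJcard] at h2
    rw [hk] at h1
    omega
  obtain ⟨s, hscard, hsli⟩ := exists_finset_linearIndependent_of_le_finrank hker
  let v : ↥s → (Fin n → ZMod p) := fun x => ((x : ↥(LinearMap.ker g)) : ↥C)
  have hvli : LinearIndependent (ZMod p) v := by
    have := hsli.map' ((C.subtype).comp (LinearMap.ker g).subtype) (by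
      rw [LinearMap.ker_comp, Submodule.ker_subtype, Submodule.comap_bot,
        LinearMap.ker_eq_bot]
      exact (LinearMap.ker g).injective_subtype)
    exact this
  set U : Submodule (ZMod p) (Fin n → ZMod p) := Submodule.span (ZMod p) (Set.range v)
    with hU
  have hUC : U ≤ C := by
    rw [hU, Submodule.span_le]
    rintro _ ⟨x, rfl⟩
    exact ((x : ↥(LinearMap.ker g)) : ↥C).2
  have hUrank : Module.finrank (ZMod p) ↥U = r := by
    rw [hU, finrank_span_eq_card hvli, Fintype.card_coe, hscard]
  letI inst : DecidablePred (fun i : Fin n => ∃ x ∈ U, x i ≠ 0) :=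
    fun i => Classical.propDecidable _
  have hvanish : ∀ x ∈ U, ∀ j ∈ J, x j = 0 := by
    intro x hx j hj
    have : U ≤ LinearMap.ker (LinearMap.proj (R := ZMod p) (φ := fun _ : Fin n => ZMod p) j) := by
      rw [hU, Submodule.span_le]
      rintro _ ⟨y, rfl⟩
      have hy : g y.1 = 0 := LinearMap.mem_ker.mp y.1.2
      have := congrFun hy ⟨j, hj⟩
      exact this
    exact this hx
  have hScard : (Finset.univ.filter (fun i : Fin n => ∃ x ∈ U, x i ≠ 0)).card
      ≤ n - k + r := by
    have hsub : Finset.univ.filter (fun i : Fin n => ∃ x ∈ U, x i ≠ 0) ⊆ Jᶜ := by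
      intro i hi
      rw [Finset.mem_filter] at hi
      obtain ⟨-, x, hxU, hxi⟩ := hi
      rw [Finset.mem_compl]
      intro hiJ
      exact hxi (hvanish x hxU i hiJ)
    calc (Finset.univ.filter (fun i : Fin n => ∃ x ∈ U, x i ≠ 0)).card
        ≤ Jᶜ.card := Finset.card_le_card hsub
      _ = n - (k - r) := by rw [Finset.card_compl, hJcard]; simp
      _ ≤ n - k + r := by omega
  constructor
  · rw [ghw]
    refine le_csInf ⟨_, U, hUC, hUrank, rfl⟩ ?_
    rintro m ⟨W, hWC, hWr, rfl⟩
    rw [← hWr]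
    exact ghw_support_card_ge W _
  · rw [ghw]
    exact le_trans (csInf_le (OrderBot.bddBelow _) ⟨U, hUC, hUrank, rfl⟩) hScard
end

section
/- Let C be an [n,k] linear code over F_p and 1 ≤ r ≤ k. Then d_r(C) ≤ ⌊ n(p^r - 1) p^{k-r} / (p^k - 1) ⌋ (Plotkin-like bound). -/
open Finset in
lemma prod_shift (p k r : ℕ) (hrk : r ≤ k) :
    (∏ j ∈ range r, (p ^ (k - 1) - p ^ j)) * (p ^ k - 1) =
      (∏ j ∈ range r, (p ^ k - p ^ j)) * (p ^ (k - r) - 1) := by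
  have h1 : ∀ j ∈ range r, p ^ k - p ^ j = p ^ j * (p ^ (k - j) - 1) := by
    intro j hj
    rw [Nat.mul_sub, mul_one, ← pow_add]
    congr 2
    have := mem_range.1 hj; omega
  have h2 : ∀ j ∈ range r, p ^ (k - 1) - p ^ j = p ^ j * (p ^ (k - 1 - j) - 1) := by
    intro j hj
    rw [Nat.mul_sub, mul_one, ← pow_add]
    congr 2
    have := mem_range.1 hj; omega
  rw [Finset.prod_congr rfl h1, Finset.prod_congr rfl h2, Finset.prod_mul_distrib,
    Finset.prod_mul_distrib, mul_assoc, mul_assoc]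
  congr 1
  have e1 : (∏ j ∈ Finset.range r, (p ^ (k - 1 - j) - 1)) * (p ^ k - 1)
      = ∏ j ∈ Finset.range (r + 1), (p ^ (k - j) - 1) := by
    rw [Finset.prod_range_succ']
    congr 1
    exact Finset.prod_congr rfl fun j _ => by rw [Nat.sub_sub, Nat.add_comm]
  have e2 : (∏ j ∈ Finset.range r, (p ^ (k - j) - 1)) * (p ^ (k - r) - 1)
      = ∏ j ∈ Finset.range (r + 1), (p ^ (k - j) - 1) := (Finset.prod_range_succ _ _).symm
  rw [e1, e2]

/-- Plotkin-like bound for generalized Hamming weights. -/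
theorem stmt1 (p n k r : ℕ) [Fact p.Prime]
    (C : Submodule (ZMod p) (Fin n → ZMod p))
    (hk : Module.finrank (ZMod p) ↥C = k)
    (hr1 : 1 ≤ r) (hrk : r ≤ k) :
    ghw C r ≤ n * (p ^ r - 1) * p ^ (k - r) / (p ^ k - 1) := by
  classical
  have hp : 2 ≤ p := (Fact.out (p := p.Prime)).two_le
  have hp1 : 1 < p := hp
  set K := ZMod p
  set V := ↥C
  set T : ℕ := ∏ j ∈ Finset.range r, (p ^ k - p ^ j) with hTdef
  set T' : ℕ := ∏ j ∈ Finset.range r, (p ^ (k - 1) - p ^ j) with hT'def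
  have hcardK : Fintype.card K = p := ZMod.card p
  -- the finset of linearly independent r-tuples in C
  set Sfin : Finset (Fin r → V) :=
    Finset.univ.filter (fun s => LinearIndependent K s) with hSdef
  have h0 : Nat.card {s : Fin r → V // LinearIndependent K s} = T := by
    rw [card_linearIndependent (K := K) (V := V) (k := r) (by rw [hk]; exact hrk), hcardK, hk,
      hTdef]
    exact Fin.prod_univ_eq_prod_range (fun j => p ^ k - p ^ j) r
  have hScard : Sfin.card = T := by
    rw [← h0, ← Nat.card_eq_finsetCard]
    exact Nat.card_congr (Equiv.subtypeEquivRight (fun s => by simp [hSdef]))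
  -- support of a tuple
  set D : (Fin r → V) → Finset (Fin n) :=
    (fun s => Finset.univ.filter (fun i : Fin n => ∃ j, (s j : Fin n → ZMod p) i ≠ 0)) with hDdef
  -- per-coordinate bound
  have hcoord : ∀ i : Fin n,
      (Sfin.filter (fun s => ∃ j, (s j : Fin n → ZMod p) i ≠ 0)).card ≤ T - T' := by
    intro i
    set ψ : V →ₗ[K] K := (LinearMap.proj i).comp C.subtype with hψdef
    set H := LinearMap.ker ψ with hHdef
    set m := Module.finrank K ↥H with hmdef
    have hm : k - 1 ≤ m := by
      have h1 := LinearMap.finrank_range_add_finrank_ker ψ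
      rw [← hHdef] at h1
      have h2 : Module.finrank K ↥(LinearMap.range ψ) ≤ 1 := by
        have := Submodule.finrank_le (LinearMap.range ψ)
        simpa [Module.finrank_self] using this
      rw [hk] at h1
      omega
    set A : Finset (Fin r → V) :=
      Sfin.filter (fun s => ∀ j, (s j : Fin n → ZMod p) i = 0) with hAdef
    have hAcard : T' ≤ A.card := by
      have hinj : Nat.card {g : Fin r → ↥H // LinearIndependent K g} ≤ A.card := by
        rw [← Nat.card_eq_finsetCard A]
        apply Nat.card_le_card_of_injective
          (fun g => (⟨fun j => ((g.1 j : V)), by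
            simp only [hAdef, hSdef, Finset.mem_filter, Finset.mem_univ, true_and]
            refine ⟨g.2.map' H.subtype (Submodule.ker_subtype H), fun j => ?_⟩
            exact (g.1 j).2⟩ : ↥A))
        intro g1 g2 h
        apply Subtype.ext
        funext j
        exact Subtype.ext (congrFun (congrArg Subtype.val h) j)
      by_cases hrm : r ≤ m
      · have h := card_linearIndependent (K := K) (V := ↥H) (k := r) hrm
        rw [hcardK, ← hmdef] at h
        have hmono : T' ≤ ∏ i : Fin r, (p ^ m - p ^ (i : ℕ)) := by
          rw [hT'def, ← Fin.prod_univ_eq_prod_range (fun j => p ^ (k - 1) - p ^ j) r]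
          exact Finset.prod_le_prod' fun j _ =>
            Nat.sub_le_sub_right (Nat.pow_le_pow_right (by omega) hm) _
        calc T' ≤ _ := hmono
          _ = _ := h.symm
          _ ≤ A.card := hinj
      · have hT'0 : T' = 0 := by
          apply Finset.prod_eq_zero (i := k - 1) (Finset.mem_range.2 (by omega))
          simp
        simp [hT'0]
    have hsplit : (Sfin.filter (fun s => ∃ j, (s j : Fin n → ZMod p) i ≠ 0)).card
        + (Sfin.filter (fun s => ¬ ∃ j, (s j : Fin n → ZMod p) i ≠ 0)).card = Sfin.card :=
      Finset.card_filter_add_card_filter_not _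
    have hAeq : Sfin.filter (fun s => ¬ ∃ j, (s j : Fin n → ZMod p) i ≠ 0) = A := by
      rw [hAdef]
      apply Finset.filter_congr
      intro s _
      push_neg
      rfl
    rw [hAeq, hScard] at hsplit
    refine Nat.le_sub_of_add_le ?_
    calc (Sfin.filter (fun s => ∃ j, (s j : Fin n → ZMod p) i ≠ 0)).card + T'
        ≤ (Sfin.filter (fun s => ∃ j, (s j : Fin n → ZMod p) i ≠ 0)).card + A.card :=
          Nat.add_le_add_left hAcard _
      _ = T := hsplit
  -- double counting
  have hsum : ∑ s ∈ Sfin, (D s).card ≤ n * (T - T') := by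
    calc ∑ s ∈ Sfin, (D s).card
        = ∑ s ∈ Sfin, ∑ i : Fin n, (if ∃ j, (s j : Fin n → ZMod p) i ≠ 0 then 1 else 0) := by
          refine Finset.sum_congr rfl fun s _ => ?_
          rw [hDdef]
          exact Finset.card_filter _ _
      _ = ∑ i : Fin n, ∑ s ∈ Sfin, (if ∃ j, (s j : Fin n → ZMod p) i ≠ 0 then 1 else 0) :=
          Finset.sum_comm
      _ = ∑ i : Fin n, (Sfin.filter (fun s => ∃ j, (s j : Fin n → ZMod p) i ≠ 0)).card := by
          refine Finset.sum_congr rfl fun i _ => ?_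
          exact (Finset.card_filter _ _).symm
      _ ≤ ∑ _i : Fin n, (T - T') := Finset.sum_le_sum fun i _ => hcoord i
      _ = n * (T - T') := by simp [mul_comm]
  -- pick a minimizing tuple
  have hne : Sfin.Nonempty := by
    have hfd : FiniteDimensional K V := inferInstance
    let b := Module.finBasis K V
    refine ⟨fun j => b (Fin.castLE (by rw [hk]; exact hrk) j), ?_⟩
    rw [hSdef, Finset.mem_filter]
    exact ⟨Finset.mem_univ _, b.linearIndependent.comp _ (Fin.castLE_injective _)⟩
  obtain ⟨s0, hs0mem, hmin⟩ := Sfin.exists_min_image (fun s => (D s).card) hne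
  set w := (D s0).card with hwdef
  have havg : T * w ≤ n * (T - T') := by
    calc T * w = ∑ _s ∈ Sfin, w := by rw [Finset.sum_const, smul_eq_mul, hScard]
      _ ≤ ∑ s ∈ Sfin, (D s).card := Finset.sum_le_sum fun s hs => hmin s hs
      _ ≤ n * (T - T') := hsum
  -- positivity
  have hTpos : 0 < T := by
    apply Finset.prod_pos
    intro j hj
    have : p ^ j < p ^ k := Nat.pow_lt_pow_right hp1 (by
      have := Finset.mem_range.1 hj; omega)
    omega
  have hT'le : T' ≤ T := Finset.prod_le_prod' fun j _ =>
    Nat.sub_le_sub_right (Nat.pow_le_pow_right (by omega) (by omega)) _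
  have hpk1 : 0 < p ^ k - 1 := by
    have : 1 < p ^ k := Nat.one_lt_pow (by omega) hp1
    omega
  -- arithmetic
  have key : w * (p ^ k - 1) ≤ n * (p ^ r - 1) * p ^ (k - r) := by
    have h1 : T * (w * (p ^ k - 1)) ≤ n * ((T - T') * (p ^ k - 1)) :=
      by calc T * (w * (p ^ k - 1)) = (T * w) * (p ^ k - 1) := by ring
        _ ≤ n * (T - T') * (p ^ k - 1) := Nat.mul_le_mul_right _ havg
        _ = n * ((T - T') * (p ^ k - 1)) := by ring
    have h2 : (T - T') * (p ^ k - 1) = T * (p ^ (k - r) * (p ^ r - 1)) := by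
      rw [Nat.sub_mul, prod_shift p k r hrk, ← Nat.mul_sub]
      congr 1
      have hle : p ^ (k - r) ≤ p ^ k := Nat.pow_le_pow_right (by omega) (by omega)
      have h3 : (p ^ k - 1) - (p ^ (k - r) - 1) = p ^ k - p ^ (k - r) := by
        have : 1 ≤ p ^ (k - r) := Nat.one_le_pow _ _ (by omega)
        omega
      rw [h3, Nat.mul_sub, mul_one, ← pow_add]
      congr 2
      omega
    rw [h2] at h1
    have h1' : T * (w * (p ^ k - 1)) ≤ T * (n * (p ^ (k - r) * (p ^ r - 1))) := by
      calc T * (w * (p ^ k - 1)) ≤ n * (T * (p ^ (k - r) * (p ^ r - 1))) := h1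
        _ = T * (n * (p ^ (k - r) * (p ^ r - 1))) := by ring
    have := Nat.le_of_mul_le_mul_left h1' hTpos
    calc w * (p ^ k - 1) ≤ n * (p ^ (k - r) * (p ^ r - 1)) := this
      _ = n * (p ^ r - 1) * p ^ (k - r) := by ring
  -- conclude via sInf
  have hghw : ghw C r ≤ w := by
    apply Nat.sInf_le
    have hs0 : LinearIndependent K s0 := by
      rw [hSdef, Finset.mem_filter] at hs0mem
      exact hs0mem.2
    set U : Submodule K (Fin n → ZMod p) :=
      Submodule.span K (Set.range (fun j => (s0 j : Fin n → ZMod p))) with hUdef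
    refine ⟨U, ?_, ?_, ?_⟩
    · rw [hUdef, Submodule.span_le]
      rintro x ⟨j, rfl⟩
      exact (s0 j).2
    · have hli : LinearIndependent K (fun j => (s0 j : Fin n → ZMod p)) :=
        hs0.map' C.subtype (Submodule.ker_subtype C)
      rw [hUdef, finrank_span_eq_card hli, Fintype.card_fin]
    · have hDs0 : D s0 = Finset.univ.filter
          (fun i : Fin n => ∃ j, (s0 j : Fin n → ZMod p) i ≠ 0) := rfl
      rw [hwdef, hDs0]
      apply congrArg
      ext i
      simp only [Finset.mem_filter, Finset.mem_univ, true_and]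
      constructor
      · rintro ⟨x, hxU, hxi⟩
        by_contra hcon
        push_neg at hcon
        have hUker : U ≤ LinearMap.ker (LinearMap.proj (R := K) (φ := fun _ : Fin n => K) i) := by
          rw [hUdef, Submodule.span_le]
          rintro y ⟨j, rfl⟩
          simpa [LinearMap.mem_ker] using hcon j
        exact hxi (by simpa using hUker hxU)
      · rintro ⟨j, hj⟩
        exact ⟨(s0 j : Fin n → ZMod p), Submodule.subset_span ⟨j, rfl⟩, hj⟩
  calc ghw C r ≤ w := hghw
    _ ≤ n * (p ^ r - 1) * p ^ (k - r) / (p ^ k - 1) := by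
      rw [Nat.le_div_iff_mul_le hpk1]
      exact key
end

section
/- Let C be an [n,k] linear code over F_p with minimum distance d_1(C), and let 1 ≤ r ≤ k. Then d_r(C) ≥ Σ_{i=0}^{r-1} ⌈ d_1(C) / p^i ⌉ (Griesmer-like bound). -/
open Finset Module Submodule

lemma Nat.ceilDiv_ceilDiv (a : ℕ) {b c : ℕ} (hb : 0 < b) (hc : 0 < c) :
    a ⌈/⌉ b ⌈/⌉ c = a ⌈/⌉ (b * c) :=
  eq_of_forall_ge_iff fun t => by
    rw [ceilDiv_le_iff_le_mul hc, ceilDiv_le_iff_le_mul hb,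
      ceilDiv_le_iff_le_mul (Nat.mul_pos hb hc), mul_assoc]

lemma Nat.sum_range_succ_ceilDiv_pow (d : ℕ) {q : ℕ} (hq : 0 < q) (r : ℕ) :
    ∑ i ∈ range (r + 1), d ⌈/⌉ q ^ i = d + ∑ i ∈ range r, d ⌈/⌉ q ⌈/⌉ q ^ i := by
  simp [sum_range_succ', Nat.ceilDiv_ceilDiv d hq (Nat.pow_pos hq), pow_succ', add_comm]

lemma Submodule.exists_le_finrank_eq {K V : Type*} [DivisionRing K] [AddCommGroup V] [Module K V]
    (C : Submodule K V) [FiniteDimensional K C] {r : ℕ} (h : r ≤ finrank K C) :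
    ∃ U ≤ C, finrank K U = r := by
  let b := Module.finBasis K C
  let f : Fin r → V := fun i => b (Fin.castLE h i)
  have hf : LinearIndependent K f :=
    (b.linearIndependent.comp _ (Fin.castLE_injective h)).map' C.subtype C.ker_subtype
  refine ⟨span K (Set.range f), span_le.2 ?_, by simp [finrank_span_eq_card hf]⟩
  rintro _ ⟨i, rfl⟩
  exact (b _).2

section codeSupport

variable {R ι : Type*} [Semiring R] [Fintype ι]

open Classical in
noncomputable def Submodule.codeSupport (U : Submodule R (ι → R)) : Finset ι :=
  {i | ∃ x ∈ U, x i ≠ 0}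

lemma Submodule.mem_codeSupport {U : Submodule R (ι → R)} {i : ι} :
    i ∈ U.codeSupport ↔ ∃ x ∈ U, x i ≠ 0 := by
  simp [codeSupport]

end codeSupport

variable {F ι : Type*} [Field F] [DecidableEq F]

/-- `D.map (residualMap x)` is the residual code of `D` at `x`, kept inside `ι → F` by zeroing the
coordinates in the support of `x` instead of deleting them. -/
def residualMap (x : ι → F) : (ι → F) →ₗ[F] (ι → F) where
  toFun y i := if x i = 0 then y i else 0
  map_add' y z := by ext i; by_cases h : x i = 0 <;> simp [h]
  map_smul' c y := by ext i; by_cases h : x i = 0 <;> simp [h]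

lemma residualMap_apply (x y : ι → F) (i : ι) :
    residualMap x y i = if x i = 0 then y i else 0 := rfl

lemma residualMap_self (x : ι → F) : residualMap x x = 0 := by
  ext i; simp [residualMap_apply]

variable [Fintype ι]

lemma Submodule.codeSupport_span_singleton (x : ι → F) :
    (span F {x}).codeSupport = ({i | x i ≠ 0} : Finset ι) := by
  ext i
  simp only [mem_codeSupport, mem_span_singleton, mem_filter, mem_univ, true_and]
  constructor
  · rintro ⟨_, ⟨c, rfl⟩, hc⟩ hx
    simp [hx] at hc
  · exact fun hx => ⟨x, ⟨1, one_smul F x⟩, hx⟩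

def Submodule.IsMinWeight (D : Submodule F (ι → F)) (x : ι → F) : Prop :=
  x ∈ D ∧ x ≠ 0 ∧ ∀ y ∈ D, y ≠ 0 → hammingNorm x ≤ hammingNorm y

lemma Submodule.exists_isMinWeight {D : Submodule F (ι → F)} (hD : D ≠ ⊥) :
    ∃ x, D.IsMinWeight x := by
  obtain ⟨x, ⟨hxD, hx0⟩, hmin⟩ :=
    (measure (hammingNorm (β := fun _ : ι => F))).wf.has_min {y | y ∈ D ∧ y ≠ 0}
      ((Submodule.ne_bot_iff D).1 hD)
  exact ⟨x, hxD, hx0, fun y hy hy0 => not_lt.1 (hmin y ⟨hy, hy0⟩)⟩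

lemma card_filter_ne_mul [Fintype F] {a : F} (ha : a ≠ 0) (b : F) :
    #{c : F | b ≠ c * a} = Fintype.card F - 1 := by
  have : ∀ c : F, b ≠ c * a ↔ c ≠ b / a := fun c => by rw [ne_eq, ne_eq, eq_div_iff ha, eq_comm]
  simp only [this, filter_ne', card_erase_of_mem (mem_univ _), card_univ]

namespace Submodule.IsMinWeight

variable {D : Submodule F (ι → F)} {x y : ι → F}

lemma mem_span_of_residualMap_eq_zero (hx : D.IsMinWeight x) (hy : y ∈ D)
    (hy0 : residualMap x y = 0) : y ∈ span F {x} := by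
  classical
  obtain ⟨hxD, hx0, hmin⟩ := hx
  obtain ⟨i, hi⟩ := Function.ne_iff.1 hx0
  -- `z` vanishes off the support of `x` (as `y` does) and at `i`, so it is lighter than `x`
  set z := y - (y i / x i) • x
  have hsupp : ({j | z j ≠ 0} : Finset ι) ⊆ ({j | x j ≠ 0} : Finset ι).erase i := by
    intro j hj
    have hzj : z j ≠ 0 := (mem_filter.1 hj).2
    refine mem_erase.2 ⟨fun hji => hzj ?_, mem_filter.2 ⟨mem_univ j, fun hxj => hzj ?_⟩⟩
    · simp [z, hji, div_mul_cancel₀ _ hi]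
    · have := congr_fun hy0 j
      simp_all [z, residualMap_apply]
  have hz : z = 0 := by
    by_contra hz
    have hlt : hammingNorm z < hammingNorm x := by
      calc hammingNorm z ≤ #(({j | x j ≠ 0} : Finset ι).erase i) := card_le_card hsupp
        _ < hammingNorm x := card_erase_lt_of_mem (mem_filter.2 ⟨mem_univ i, hi⟩)
    exact hlt.not_ge (hmin z (D.sub_mem hy (D.smul_mem _ hxD)) hz)
  exact mem_span_singleton.2 ⟨y i / x i, (sub_eq_zero.1 hz).symm⟩

lemma finrank_map_residualMap_add_one (hx : D.IsMinWeight x) :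
    finrank F (D.map (residualMap x)) + 1 = finrank F D := by
  set f := (residualMap x).domRestrict D
  have hker : LinearMap.ker f = span F {⟨x, hx.1⟩} := by
    refine le_antisymm (fun y hy => ?_) ((span_singleton_le_iff_mem _ _).2 ?_)
    · obtain ⟨c, hc⟩ := mem_span_singleton.1 (hx.mem_span_of_residualMap_eq_zero y.2 hy)
      exact mem_span_singleton.2 ⟨c, Subtype.ext hc⟩
    · exact residualMap_self x
  have hx0 : (⟨x, hx.1⟩ : D) ≠ 0 := fun h => hx.2.1 (congr_arg Subtype.val h)
  rw [← f.finrank_range_add_finrank_ker, hker, finrank_span_singleton hx0,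
    LinearMap.range_domRestrict]

lemma le_card_mul_hammingNorm_residualMap [Fintype F] (hx : D.IsMinWeight x) (hy : y ∈ D)
    (hy0 : residualMap x y ≠ 0) :
    hammingNorm x ≤ Fintype.card F * hammingNorm (residualMap x y) := by
  classical
  obtain ⟨hxD, -, hmin⟩ := hx
  set S : Finset ι := {i | x i ≠ 0}
  set q := Fintype.card F
  set A := hammingNorm (residualMap x y)
  set mismatch : F → ℕ := fun c => #{i ∈ S | y i ≠ c * x i}
  have hle : ∀ c, hammingNorm x ≤ A + mismatch c := fun c => by
    have hne : y - c • x ≠ 0 := fun h => hy0 (by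
      rw [← sub_add_cancel y (c • x), h, zero_add, map_smul, residualMap_self, smul_zero])
    refine (hmin _ (D.sub_mem hy (D.smul_mem c hxD)) hne).trans
      ((card_le_card fun i hi => ?_).trans (card_union_le _ _))
    have hi : y i - c * x i ≠ 0 := by simpa using hi
    by_cases hxi : x i = 0
    · exact mem_union_left _ (by simpa [residualMap_apply, hxi] using hi)
    · exact mem_union_right _ (by simpa [S, hxi, sub_eq_zero] using hi)
  -- each coordinate of `S` is matched by exactly one multiple of `x`
  have hsum : ∑ c, mismatch c = (q - 1) * hammingNorm x := by
    simp only [mismatch, card_filter]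
    rw [sum_comm, hammingNorm, mul_comm, ← smul_eq_mul, ← sum_const]
    refine sum_congr rfl fun i hi => ?_
    rw [← card_filter, card_filter_ne_mul (mem_filter.1 hi).2]
  have hq : 0 < q := Fintype.card_pos
  have hsum_le : q * hammingNorm x ≤ q * A + (q - 1) * hammingNorm x := by
    calc q * hammingNorm x = ∑ _c : F, hammingNorm x := by simp [q]
      _ ≤ ∑ c, (A + mismatch c) := sum_le_sum fun c _ => hle c
      _ = q * A + (q - 1) * hammingNorm x := by simp [sum_add_distrib, hsum, q]
  have hq_mul : q * hammingNorm x = (q - 1) * hammingNorm x + hammingNorm x := by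
    rw [← Nat.succ_mul, Nat.succ_eq_add_one, Nat.sub_add_cancel hq]
  linarith

end Submodule.IsMinWeight

lemma disjoint_support_codeSupport_map_residualMap (D : Submodule F (ι → F)) (x : ι → F) :
    Disjoint ({i | x i ≠ 0} : Finset ι) (D.map (residualMap x)).codeSupport := by
  rw [disjoint_left]
  intro i hi hi'
  obtain ⟨_, ⟨y, -, rfl⟩, hyi⟩ := mem_codeSupport.1 hi'
  simp_all [residualMap_apply]

lemma hammingNorm_add_card_codeSupport_map_residualMap_le {D : Submodule F (ι → F)} {x : ι → F}
    (hx : x ∈ D) : hammingNorm x + #(D.map (residualMap x)).codeSupport ≤ #D.codeSupport := by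
  classical
  rw [hammingNorm, ← card_union_of_disjoint (disjoint_support_codeSupport_map_residualMap D x)]
  refine card_le_card fun i hi => mem_codeSupport.2 ?_
  rcases mem_union.1 hi with hi | hi
  · exact ⟨x, hx, (mem_filter.1 hi).2⟩
  · obtain ⟨_, ⟨y, hy, rfl⟩, hyi⟩ := mem_codeSupport.1 hi
    refine ⟨y, hy, fun h => hyi ?_⟩
    simp [residualMap_apply, h]

theorem Submodule.sum_ceilDiv_pow_le_card_codeSupport [Fintype F] (D : Submodule F (ι → F))
    {d : ℕ} (hd : ∀ x ∈ D, x ≠ 0 → d ≤ hammingNorm x) :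
    ∑ i ∈ range (finrank F D), d ⌈/⌉ Fintype.card F ^ i ≤ #D.codeSupport := by
  induction hr : finrank F D generalizing D d with
  | zero => simp
  | succ r ih =>
    have hq : 0 < Fintype.card F := Fintype.card_pos
    obtain ⟨x, hx⟩ := exists_isMinWeight (D := D) (Submodule.one_le_finrank_iff.1 (by omega))
    have hd' : ∀ z ∈ D.map (residualMap x), z ≠ 0 → d ⌈/⌉ Fintype.card F ≤ hammingNorm z := by
      rintro _ ⟨y, hy, rfl⟩ hz
      rw [ceilDiv_le_iff_le_mul hq]
      exact (hd x hx.1 hx.2.1).trans (hx.le_card_mul_hammingNorm_residualMap hy hz)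
    have hr' : finrank F (D.map (residualMap x)) = r := by
      have := hx.finrank_map_residualMap_add_one; omega
    calc ∑ i ∈ range (r + 1), d ⌈/⌉ Fintype.card F ^ i
        = d + ∑ i ∈ range r, d ⌈/⌉ Fintype.card F ⌈/⌉ Fintype.card F ^ i :=
          Nat.sum_range_succ_ceilDiv_pow d hq r
      _ ≤ hammingNorm x + #(D.map (residualMap x)).codeSupport :=
          add_le_add (hd x hx.1 hx.2.1) (ih _ hd' hr')
      _ ≤ #D.codeSupport := hammingNorm_add_card_codeSupport_map_residualMap_le hx.1

section ghw

variable {p : ℕ} {ι : Type} [Fintype ι] {C : Submodule (ZMod p) (ι → ZMod p)}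

lemma ghw_le_card_codeSupport {U : Submodule (ZMod p) (ι → ZMod p)} (hUC : U ≤ C) :
    ghw C (finrank (ZMod p) U) ≤ #U.codeSupport :=
  Nat.sInf_le ⟨U, hUC, rfl, rfl⟩

lemma exists_card_codeSupport_eq_ghw [Fact p.Prime] {r : ℕ} (h : r ≤ finrank (ZMod p) C) :
    ∃ U ≤ C, finrank (ZMod p) U = r ∧ #U.codeSupport = ghw C r := by
  obtain ⟨U, hUC, hU⟩ := C.exists_le_finrank_eq h
  exact Nat.sInf_mem (s := {k | ∃ U ≤ C, finrank (ZMod p) U = r ∧ #U.codeSupport = k})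
    ⟨_, U, hUC, hU, rfl⟩

lemma ghw_one_le_hammingNorm [Fact p.Prime] {x : ι → ZMod p} (hx : x ∈ C) (hx0 : x ≠ 0) :
    ghw C 1 ≤ hammingNorm x := by
  simpa [codeSupport_span_singleton, finrank_span_singleton hx0, hammingNorm] using
    ghw_le_card_codeSupport ((span_singleton_le_iff_mem x C).2 hx)

end ghw

theorem stmt2_general (p n k r : ℕ) [Fact p.Prime]
    (C : Submodule (ZMod p) (Fin n → ZMod p))
    (hk : Module.finrank (ZMod p) ↥C = k)
    (hrk : r ≤ k) :
    ∑ i ∈ Finset.range r, (ghw C 1 + p ^ i - 1) / p ^ i ≤ ghw C r := by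
  obtain ⟨D, hDC, rfl, hD⟩ := exists_card_codeSupport_eq_ghw (hk ▸ hrk)
  have hbound := D.sum_ceilDiv_pow_le_card_codeSupport fun x hx hx0 =>
    ghw_one_le_hammingNorm (hDC hx) hx0
  rwa [ZMod.card, hD] at hbound

/-- Griesmer-like bound: `d_r(C) ≥ Σ_{i=0}^{r-1} ⌈d_1(C)/p^i⌉`
(for naturals, `⌈a/b⌉ = (a + b - 1)/b` when `b > 0`). -/
theorem stmt2 (p n k r : ℕ) [Fact p.Prime]
    (C : Submodule (ZMod p) (Fin n → ZMod p))
    (hk : Module.finrank (ZMod p) ↥C = k)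
    (hr1 : 1 ≤ r) (hrk : r ≤ k) :
    ∑ i ∈ Finset.range r, (ghw C 1 + p ^ i - 1) / p ^ i ≤ ghw C r :=
  stmt2_general p n k r C hk hrk
end

section
/- Let q = p^m and let e be a positive divisor of q−1. Set e' = gcd((q−1)/(p−1), e). Then for any 0 ≤ i < e, the multiset { x y : y ∈ F_p^*, x ∈ C_i^{(e,q)} } equals the multiset in which each element of C_i^{(e',q)} appears with multiplicity (p−1)·e'/e. -/
open scoped Classical

/-- The `i`-th cyclotomic class `C_i^{(e,q)} = α^i ⟨α^e⟩` of order `e` in `F_q`. -/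
noncomputable def cyc {F : Type} [Field F] [Fintype F] (α : F) (e i : ℕ) : Finset F :=
  (Finset.range ((Fintype.card F - 1) / e)).image (fun j => α ^ i * (α ^ e) ^ j)

/-!
Write `α = u` for a generator `u` of `F_q^*` and `d = (q - 1) / (p - 1)`. The image of `F_p^*`
is the subgroup of order `p - 1` of the cyclic group `F_q^*`, that is `⟨u^d⟩`. So the multiset is
`α^i` times the multiset of values of the homomorphism `⟨u^e⟩ × F_p^* → F_q^*`, `(h, y) ↦ h y`.
A homomorphism takes each value in its range equally often, and by Bézout its range is
`⟨u^e⟩⟨u^d⟩ = ⟨u^e'⟩` with `e' = gcd(d, e)`; counting gives the multiplicity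
`(q - 1) / e * (p - 1) / ((q - 1) / e') = (p - 1) e' / e`.
-/

open Finset Subgroup

theorem MonoidHom.univ_val_map_eq_nsmul {A B : Type*} [Group A] [Fintype A] [Group B]
    [DecidableEq B] (f : A →* B) :
    univ.val.map f = (Fintype.card A / Nat.card f.range) • (univ.image f).val := by
  have hcount (b : B) : (univ.val.map f).count b = #{a | f a = b} := by
    simp [Multiset.count_map, Finset.card_def, Finset.filter_val, eq_comm]
  have hfiber : univ.val.map f = #{a | f a = 1} • (univ.image f).val := by
    ext b
    rw [Multiset.count_nsmul, hcount]
    by_cases hb : b ∈ Set.range f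
    · rw [Multiset.count_eq_one_of_mem (univ.image f).nodup (by simpa using hb), mul_one,
        MonoidHom.card_fiber_eq_of_mem_range f hb ⟨1, map_one f⟩]
    · rw [Multiset.count_eq_zero_of_notMem (by simpa using hb), mul_zero, card_eq_zero]
      exact filter_false_of_mem fun a _ hab => hb ⟨a, hab⟩
  have hrange : (univ.image f).card = Nat.card f.range := by
    rw [← Set.toFinset_range, Set.toFinset_card, ← Nat.card_eq_fintype_card,
      ← MonoidHom.coe_range]
    rfl
  have hcard := congrArg Multiset.card hfiber
  rw [Multiset.card_map, Multiset.card_nsmul, ← card_def, ← card_def, card_univ,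
    hrange] at hcard
  rwa [hcard, Nat.mul_div_cancel _ Nat.card_pos]

theorem Subgroup.zpowers_pow_sup_zpowers_pow {G : Type*} [Group G] (g : G) (a b : ℕ) :
    zpowers (g ^ a) ⊔ zpowers (g ^ b) = zpowers (g ^ a.gcd b) := by
  have hdvd {c : ℕ} (hc : a.gcd b ∣ c) : g ^ c ∈ zpowers (g ^ a.gcd b) := by
    obtain ⟨k, rfl⟩ := hc
    rw [pow_mul]
    exact pow_mem (mem_zpowers _) k
  refine le_antisymm (sup_le (zpowers_le.2 (hdvd (Nat.gcd_dvd_left a b)))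
    (zpowers_le.2 (hdvd (Nat.gcd_dvd_right a b)))) (zpowers_le.2 ?_)
  have hbezout : g ^ a.gcd b = (g ^ a) ^ a.gcdA b * (g ^ b) ^ a.gcdB b := by
    rw [← zpow_natCast, Nat.gcd_eq_gcd_ab, zpow_add, zpow_mul, zpow_mul, zpow_natCast,
      zpow_natCast]
  rw [hbezout]
  exact mul_mem (zpow_mem (mem_sup_left (mem_zpowers _)) _)
    (zpow_mem (mem_sup_right (mem_zpowers _)) _)

theorem Subgroup.eq_zpowers_pow_of_orderOf_eq_card {G : Type*} [Group G] [Finite G] {g : G}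
    (hg : orderOf g = Nat.card G) (H : Subgroup G) :
    H = zpowers (g ^ (orderOf g / Nat.card H)) := by
  have hdvd : Nat.card H ∣ orderOf g := hg ▸ H.card_subgroup_dvd_card
  refine eq_of_le_of_card_ge (fun x hx => ?_) ?_
  · have hgen : zpowers g = ⊤ := eq_top_of_card_eq _ (by rw [Nat.card_zpowers, hg])
    obtain ⟨j, rfl⟩ := mem_powers_iff_mem_zpowers.2 (hgen ▸ mem_top x)
    have hj : orderOf g ∣ j * Nat.card H := by
      rw [orderOf_dvd_iff_pow_eq_one, pow_mul]
      exact congrArg Subtype.val (pow_card_eq_one' (G := H) (x := ⟨g ^ j, hx⟩))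
    obtain ⟨k, rfl⟩ : orderOf g / Nat.card H ∣ j := by
      refine Nat.dvd_of_mul_dvd_mul_right (Nat.card_pos (α := H)) ?_
      rwa [Nat.div_mul_cancel hdvd]
    simp only [pow_mul]
    exact pow_mem (mem_zpowers _) k
  · rw [Nat.card_zpowers, orderOf_pow_orderOf_div (orderOf_pos g).ne' hdvd]

theorem range_unitsMap_algebraMap_eq_zpowers (p : ℕ) [Fact p.Prime] {F : Type*} [Field F]
    [Fintype F] [Algebra (ZMod p) F] {u : Fˣ} (hu : orderOf u = Fintype.card F - 1) :
    (Units.map (algebraMap (ZMod p) F : ZMod p →* F)).range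
      = zpowers (u ^ ((Fintype.card F - 1) / (p - 1))) := by
  have hinj : Function.Injective (Units.map (algebraMap (ZMod p) F : ZMod p →* F)) :=
    Units.map_injective (algebraMap (ZMod p) F).injective
  have hcard : Nat.card (Units.map (algebraMap (ZMod p) F : ZMod p →* F)).range = p - 1 := by
    rw [← SetLike.coe_sort_coe, MonoidHom.coe_range, Nat.card_range_of_injective hinj,
      Nat.card_eq_fintype_card, ZMod.card_units]
  have hgen : orderOf u = Nat.card Fˣ := by
    rw [hu, Nat.card_eq_fintype_card, Fintype.card_units]
  rw [eq_zpowers_pow_of_orderOf_eq_card hgen (Units.map _).range, hcard, hu]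

theorem Finset.val_filter_mem_bind_eq_map_prod {α β γ σ : Type*} [Fintype α] [Fintype β]
    [SetLike σ α] (s : σ) [DecidablePred (· ∈ s)] (w : α → β → γ) :
    (univ.filter (· ∈ s)).val.bind (fun a => univ.val.map (w a))
      = (univ : Finset (s × β)).val.map (fun x => w x.1 x.2) := by
  rw [← univ_product_univ, product_val, ← subtype_map, map_val, subtype_univ]
  simp [SProd.sprod, Multiset.product, Multiset.map_bind, Multiset.bind_map, Multiset.map_map]

theorem cyc_val_eq_map_filter_mem_zpowers {F : Type} [Field F] [Fintype F] (u : Fˣ)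
    (hu : orderOf u = Fintype.card F - 1) {k : ℕ} (hk : k ∣ orderOf u) (i : ℕ) :
    (cyc (u : F) k i).val
      = (univ.filter (· ∈ zpowers (u ^ k))).val.map (fun h : Fˣ => (u : F) ^ i * h) := by
  have hinj : Function.Injective (fun h : Fˣ => (u : F) ^ i * h) := fun a b hab =>
    Units.val_injective (mul_left_cancel₀ (pow_ne_zero i u.ne_zero) hab)
  refine (Multiset.Nodup.ext (cyc (u : F) k i).nodup
    ((univ.filter (· ∈ zpowers (u ^ k))).nodup.map hinj)).2 fun z => ?_
  have hord : orderOf (u ^ k) = (Fintype.card F - 1) / k := by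
    rw [← hu, orderOf_pow_of_dvd (ne_zero_of_dvd_ne_zero (orderOf_pos u).ne' hk) hk]
  simp [cyc, mem_zpowers_iff_mem_range_orderOf, hord]

theorem cyc_val_bind_mul_eq_map_noncommCoprod {F : Type} {A : Type*} [Field F] [Fintype F]
    [Group A] [Fintype A] (u : Fˣ) (hu : orderOf u = Fintype.card F - 1) {k : ℕ}
    (hk : k ∣ orderOf u) (i : ℕ) (ι : A →* Fˣ) :
    (cyc (u : F) k i).val.bind (fun x => univ.val.map fun a => x * (ι a : F))
      = (univ.val.map ((zpowers (u ^ k)).subtype.noncommCoprod ι fun _ _ => Commute.all _ _)).map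
          (fun h : Fˣ => (u : F) ^ i * h) := by
  rw [cyc_val_eq_map_filter_mem_zpowers u hu hk, Multiset.bind_map,
    val_filter_mem_bind_eq_map_prod, Multiset.map_map]
  congr 1
  funext x
  simp [mul_assoc]

theorem Nat.div_mul_div_div_of_dvd {n e e' : ℕ} (k : ℕ) (he' : e' ∣ e) (he : e ∣ n)
    (hn : n ≠ 0) :
    n / e * k / (n / e') = k * e' / e := by
  obtain ⟨a, rfl⟩ := he'
  obtain ⟨b, rfl⟩ := he
  have he' : e' ≠ 0 := by rintro rfl; simp at hn
  have hb : 0 < b := Nat.pos_of_ne_zero (by rintro rfl; simp at hn)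
  have ha : e' * a ≠ 0 := by rintro h; simp [h] at hn
  rw [Nat.mul_div_cancel_left _ (Nat.pos_of_ne_zero ha), mul_assoc,
    Nat.mul_div_cancel_left _ (Nat.pos_of_ne_zero he'), mul_comm a, Nat.mul_div_mul_left _ _ hb,
    mul_comm k, Nat.mul_div_mul_left _ _ (Nat.pos_of_ne_zero he')]

theorem card_zpowers_pow_mul_div_card_zpowers_pow {G : Type*} [Group G] {g : G}
    (hg : orderOf g ≠ 0) {e e' : ℕ} (he' : e' ∣ e) (he : e ∣ orderOf g) (k : ℕ) :
    Nat.card (zpowers (g ^ e)) * k / Nat.card (zpowers (g ^ e')) = k * e' / e := by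
  have hord {c : ℕ} (hc : c ∣ orderOf g) : orderOf (g ^ c) = orderOf g / c :=
    orderOf_pow_of_dvd (ne_zero_of_dvd_ne_zero hg hc) hc
  rw [Nat.card_zpowers, Nat.card_zpowers, hord he, hord (he'.trans he),
    Nat.div_mul_div_div_of_dvd k he' he hg]

theorem stmt7_general (p m e : ℕ) [Fact p.Prime]
    (F : Type) [Field F] [Fintype F] [Algebra (ZMod p) F]
    (hq : Fintype.card F = p ^ m)
    (α : F) (hα : orderOf α = p ^ m - 1)
    (he : e ∣ p ^ m - 1)
    (i : ℕ) :
    ((cyc α e i).val.bind (fun x =>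
        (Finset.univ : Finset (ZMod p)ˣ).val.map
          (fun y => x * algebraMap (ZMod p) F (y : ZMod p))))
      = ((p - 1) * Nat.gcd ((p ^ m - 1) / (p - 1)) e / e) •
          (cyc α (Nat.gcd ((p ^ m - 1) / (p - 1)) e) i).val := by
  have hn : p ^ m - 1 ≠ 0 := by
    have := hq ▸ Fintype.one_lt_card (α := F)
    omega
  obtain ⟨u, rfl⟩ : IsUnit α := (orderOf_pos_iff.1 (hα ▸ Nat.pos_of_ne_zero hn)).isUnit
  rw [orderOf_units] at hα
  have hu : orderOf u = Fintype.card F - 1 := by rw [hα, hq]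
  have he' : ((p ^ m - 1) / (p - 1)).gcd e ∣ orderOf u := by
    rw [hα]; exact (Nat.gcd_dvd_right _ _).trans he
  let ι : (ZMod p)ˣ →* Fˣ := Units.map (algebraMap (ZMod p) F : ZMod p →* F)
  let φ := (zpowers (u ^ e)).subtype.noncommCoprod ι fun _ _ => Commute.all _ _
  have hφ : φ.range = zpowers (u ^ ((p ^ m - 1) / (p - 1)).gcd e) := by
    rw [MonoidHom.noncommCoprod_range, range_subtype, range_unitsMap_algebraMap_eq_zpowers p hu,
      hq, zpowers_pow_sup_zpowers_pow, Nat.gcd_comm]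
  have himage :
      univ.image φ = univ.filter (· ∈ zpowers (u ^ ((p ^ m - 1) / (p - 1)).gcd e)) := by
    ext x
    simp [← hφ]
  calc _ = (cyc (u : F) e i).val.bind (fun x => univ.val.map fun a => x * (ι a : F)) := by
        -- the statement lifts `univ : Multiset (ZMod p)ˣ` to `Multiset (ZMod p)` monadically
        simp only [bind, pure, Multiset.bind_singleton, Multiset.map_map]
        rfl
    _ = (univ.val.map φ).map (fun h : Fˣ => (u : F) ^ i * h) :=
        cyc_val_bind_mul_eq_map_noncommCoprod u hu (hα ▸ he) i ι
    _ = _ := by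
      rw [MonoidHom.univ_val_map_eq_nsmul, himage, Multiset.map_nsmul, Fintype.card_prod,
        ZMod.card_units, ← Nat.card_eq_fintype_card, hφ,
        card_zpowers_pow_mul_div_card_zpowers_pow (orderOf_pos u).ne' (Nat.gcd_dvd_right _ _)
          (hα ▸ he), cyc_val_eq_map_filter_mem_zpowers u hu he']

/-- The multiset `{xy : y ∈ F_p^*, x ∈ C_i^{(e,q)}}` equals the multiset where each
element of `C_i^{(e',q)}`, `e' = gcd((q-1)/(p-1), e)`, appears with multiplicity
`(p-1)e'/e`. -/
theorem stmt7 (p m e : ℕ) [Fact p.Prime]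
    (F : Type) [Field F] [Fintype F] [Algebra (ZMod p) F]
    (hq : Fintype.card F = p ^ m)
    (α : F) (hα : orderOf α = p ^ m - 1)
    (he : e ∣ p ^ m - 1) (he0 : 0 < e)
    (i : ℕ) (hi : i < e) :
    ((cyc α e i).val.bind (fun x =>
        (Finset.univ : Finset (ZMod p)ˣ).val.map
          (fun y => x * algebraMap (ZMod p) F (y : ZMod p))))
      = ((p - 1) * Nat.gcd ((p ^ m - 1) / (p - 1)) e / e) •
          (cyc α (Nat.gcd ((p ^ m - 1) / (p - 1)) e) i).val :=
  stmt7_general p m e F hq α hα he i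
end

section
/- Let p be an odd prime, q = p^m, N a divisor of q−1 with N_1 = gcd(N, (q−1)/(p−1)), N_2 = lcm(N, (q−1)/(p−1)), and n_2 = N_2/N. Let θ = α^N for a primitive element α of F_q, and define the code C_D from the defining set D = {θ^i : 0 ≤ i < n_2} by C_D = {(Tr(a d))_{d∈D} : a ∈ F_q}. If 1 ≤ N_1 ≤ √q, then for every a ∈ F_q^* the codeword c(a) = (Tr(a θ^i))_{0≤i<n_2} has nonzero Hamming weight; equivalently, the map a ↦ c(a) is injective and C_D has dimension m. -/
open scoped Pointwise

lemma dvd_of_pow_sub_one_dvd {p d m : ℕ} (hp : 2 ≤ p) (hd : 1 ≤ d)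
    (h : p ^ d - 1 ∣ p ^ m - 1) : d ∣ m := by
  rcases Nat.eq_zero_or_pos m with rfl | hm
  · exact dvd_zero d
  obtain ⟨k, r, hrd, hm'⟩ : ∃ k r, r < d ∧ m = d * k + r :=
    ⟨m / d, m % d, Nat.mod_lt _ hd, (Nat.div_add_mod m d).symm⟩
  have h1 : p ^ d - 1 ∣ p ^ (d * k) - 1 := by
    simpa only [one_pow, pow_mul] using Nat.sub_dvd_pow_sub_pow (p ^ d) 1 k
  have h3 : 1 ≤ p ^ (d * k) := Nat.one_le_pow _ _ (by omega)
  have h4 : 1 ≤ p ^ r := Nat.one_le_pow _ _ (by omega)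
  have h2 : p ^ m - 1 = p ^ r * (p ^ (d * k) - 1) + (p ^ r - 1) := by
    rw [hm', pow_add, Nat.mul_sub, Nat.mul_one, mul_comm (p ^ (d*k)) (p ^ r)]
    have h5 : p ^ r ≤ p ^ r * p ^ (d * k) := Nat.le_mul_of_pos_right _ (by positivity)
    omega
  have hkey : p ^ d - 1 ∣ p ^ r - 1 :=
    (Nat.dvd_add_right (Dvd.dvd.mul_left h1 (p ^ r))).mp (h2 ▸ h)
  have hlt : p ^ r - 1 < p ^ d - 1 := by
    have : p ^ r < p ^ d := Nat.pow_lt_pow_right (by omega) hrd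
    omega
  have hr0 : p ^ r - 1 = 0 := Nat.eq_zero_of_dvd_of_lt hkey hlt
  have : r = 0 := by
    by_contra hr
    have : p ^ r ≥ p ^ 1 := Nat.pow_le_pow_right (by omega) (by omega)
    simp [pow_one] at this; omega
  subst this
  exact ⟨k, by omega⟩

open Polynomial in
lemma mem_range_of_pow_card_eq {p : ℕ} [Fact p.Prime] {F : Type} [Field F] [Fintype F]
    [Algebra (ZMod p) F] {x : F} (hx : x ^ p = x) :
    ∃ c : ZMod p, algebraMap (ZMod p) F c = x := by
  classical
  have hp2 : 2 ≤ p := (Fact.out : p.Prime).two_le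
  set f : F[X] := X ^ p - X with hf
  have hdeg : f.natDegree = p := by
    rw [hf, natDegree_sub_eq_left_of_natDegree_lt] <;>
      simp [natDegree_X_pow, natDegree_X]; omega
  have hf0 : f ≠ 0 := fun h => by simp [h] at hdeg; omega
  set T : Finset F := Finset.image (algebraMap (ZMod p) F) Finset.univ with hT
  have hinj : Function.Injective (algebraMap (ZMod p) F) := (algebraMap (ZMod p) F).injective
  have hcardT : T.card = p := by
    rw [hT, Finset.card_image_of_injective _ hinj, Finset.card_univ, ZMod.card]
  have hroot : ∀ y ∈ T, y ∈ f.roots.toFinset := by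
    intro y hy
    rw [hT, Finset.mem_image] at hy
    obtain ⟨c, -, rfl⟩ := hy
    rw [Multiset.mem_toFinset, mem_roots hf0]
    simp [hf, ← map_pow, ZMod.pow_card]
  have hcardR : f.roots.toFinset.card ≤ p := by
    calc f.roots.toFinset.card ≤ Multiset.card f.roots := f.roots.toFinset_card_le
    _ ≤ f.natDegree := f.card_roots'
    _ = p := hdeg
  have heq : f.roots.toFinset = T :=
    (Finset.eq_of_subset_of_card_le hroot (hcardT ▸ hcardR)).symm
  have hxmem : x ∈ f.roots.toFinset := by
    rw [Multiset.mem_toFinset, mem_roots hf0]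
    simp [hf, hx]
  rw [heq, hT, Finset.mem_image] at hxmem
  obtain ⟨c, -, hc⟩ := hxmem
  exact ⟨c, hc⟩

lemma zpow_eq_pow_toNat {F : Type} [Field F] {x : F} {e : ℕ} (he : e ≠ 0)
    (hx1 : x ^ e = 1) (z : ℤ) : x ^ z = x ^ (z % (e : ℤ)).toNat := by
  have hx0 : x ≠ 0 := by
    rintro rfl
    rw [zero_pow he] at hx1
    exact zero_ne_one hx1
  have h1 : x ^ (e : ℤ) = 1 := by rw [zpow_natCast]; exact hx1
  have hnn : 0 ≤ z % (e : ℤ) := Int.emod_nonneg z (by exact_mod_cast he)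
  calc x ^ z = x ^ ((e : ℤ) * (z / e) + z % e) := by rw [Int.mul_ediv_add_emod]
  _ = (x ^ (e : ℤ)) ^ (z / (e : ℤ)) * x ^ (z % (e : ℤ)) := by
      rw [zpow_add₀ hx0, zpow_mul]
  _ = x ^ (z % (e : ℤ)) := by rw [h1, one_zpow, one_mul]
  _ = x ^ (z % (e : ℤ)).toNat := by
      rw [← zpow_natCast, Int.toNat_of_nonneg hnn]

set_option maxHeartbeats 1000000 in
/-- If `1 ≤ N₁ ≤ √q`, every nonzero `a ∈ F_q` gives a codeword
`(Tr(a θ^j))_{0 ≤ j < n₂}` of nonzero Hamming weight (so `C_D` has dimension `m`). -/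
theorem stmt9 (p m N : ℕ) [Fact p.Prime] (hp : Odd p)
    (F : Type) [Field F] [Fintype F] [Algebra (ZMod p) F]
    (hq : Fintype.card F = p ^ m)
    (α : F) (hα : orderOf α = p ^ m - 1)
    (hN : N ∣ p ^ m - 1) (hN0 : 0 < N)
    (N₁ N₂ n₂ : ℕ)
    (hN₁ : N₁ = Nat.gcd N ((p ^ m - 1) / (p - 1)))
    (hN₂ : N₂ = Nat.lcm N ((p ^ m - 1) / (p - 1)))
    (hn₂ : n₂ = N₂ / N)
    (h1 : 1 ≤ N₁) (hsq : (N₁ : ℝ) ≤ Real.sqrt (p ^ m))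
    (a : F) (ha : a ≠ 0) :
    ∃ j < n₂, Algebra.trace (ZMod p) F (a * (α ^ N) ^ j) ≠ 0 := by
  classical
  by_contra hcon
  push_neg at hcon
  -- basic numerology
  have hp2 : 2 ≤ p := (Fact.out : p.Prime).two_le
  have hp3 : 3 ≤ p := by
    rcases hp with ⟨k, hk⟩; omega
  set Q := p ^ m with hQ
  have hQcard : Fintype.card F = Q := hq
  have hm1 : 1 ≤ m := by
    by_contra hm
    have : m = 0 := by omega
    have h2 : 2 ≤ Fintype.card F := Fintype.one_lt_card
    rw [hQcard, hQ, this, pow_zero] at h2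
    omega
  have hQ3 : 3 ≤ Q := by
    calc 3 ≤ p := hp3
    _ = p ^ 1 := (pow_one p).symm
    _ ≤ p ^ m := Nat.pow_le_pow_right (by omega) hm1
  have hQ1 : 2 ≤ Q - 1 := by omega
  set t := (Q - 1) / (p - 1) with ht
  have htdvd : (p - 1) ∣ Q - 1 := by
    simpa only [one_pow] using Nat.sub_dvd_pow_sub_pow p 1 m
  have htmul : t * (p - 1) = Q - 1 := Nat.div_mul_cancel htdvd
  have ht1 : 1 ≤ t := by
    rcases Nat.eq_zero_or_pos t with h | h
    · rw [h, zero_mul] at htmul; omega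
    · exact h
  -- α basics
  have hαpow : α ^ (Q - 1) = 1 := by rw [← hα]; exact pow_orderOf_eq_one α
  have hα0 : α ≠ 0 := by
    rintro rfl
    rw [zero_pow (by omega : Q - 1 ≠ 0)] at hαpow
    exact zero_ne_one hαpow
  -- the scalar c = α^t lies in the prime field
  have hct : (α ^ t) ^ p = α ^ t := by
    have h1 : (α ^ t) ^ (p - 1) = 1 := by
      rw [← pow_mul, htmul, hαpow]
    calc (α ^ t) ^ p = (α ^ t) ^ (p - 1) * (α ^ t) ^ 1 := by
          rw [← pow_add]; congr 1; omega
    _ = α ^ t := by rw [h1, one_mul, pow_one]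
  obtain ⟨c₀, hc₀⟩ := mem_range_of_pow_card_eq hct
  have hc₀0 : c₀ ≠ 0 := by
    rintro rfl
    rw [map_zero] at hc₀
    exact pow_ne_zero t hα0 hc₀.symm
  -- N₂ facts
  have hNdvd : N ∣ N₂ := hN₂ ▸ Nat.dvd_lcm_left _ _
  have htdvdN₂ : t ∣ N₂ := hN₂ ▸ Nat.dvd_lcm_right _ _
  have hN₂pos : 0 < N₂ := by
    rw [hN₂]
    exact Nat.pos_of_ne_zero (Nat.lcm_ne_zero (by omega) (by omega))
  have hNn₂ : N * n₂ = N₂ := by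
    rw [hn₂, Nat.mul_div_cancel' hNdvd]
  have hn₂pos : 0 < n₂ := by
    rcases Nat.eq_zero_or_pos n₂ with h | h
    · rw [h, mul_zero] at hNn₂; omega
    · exact h
  -- θ^{n₂} is a scalar
  set s : ZMod p := c₀ ^ (N₂ / t) with hs
  have hθn₂ : (α ^ N) ^ n₂ = algebraMap (ZMod p) F s := by
    rw [← pow_mul, hNn₂, ← Nat.div_mul_cancel htdvdN₂, mul_comm (N₂ / t) t, pow_mul, ← hc₀, ← map_pow]
  -- Step B : trace vanishes on all natural powers of θ
  have hB : ∀ u : ℕ, Algebra.trace (ZMod p) F (a * (α ^ N) ^ u) = 0 := by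
    intro u
    induction u using Nat.strong_induction_on with
    | _ u ih =>
      rcases lt_or_ge u n₂ with h | h
      · exact hcon u h
      · obtain ⟨w, rfl⟩ : ∃ w, u = w + n₂ := ⟨u - n₂, by omega⟩
        have : a * (α ^ N) ^ (w + n₂) = s • (a * (α ^ N) ^ w) := by
          rw [pow_add, hθn₂, Algebra.smul_def]; ring
        rw [this, map_smul, ih w (by omega), smul_zero]
  -- Step C : trace vanishes on a * α^(N₁ * z) for all z : ℤ
  have hgcd : N₁ = Nat.gcd N t := hN₁
  have hN₁dvdN : N₁ ∣ N := hgcd ▸ Nat.gcd_dvd_left _ _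
  have hN₁dvdQ : N₁ ∣ Q - 1 := hN₁dvdN.trans hN
  have hθQ : (α ^ N) ^ (Q - 1) = 1 := by
    rw [← pow_mul, mul_comm, pow_mul, hαpow, one_pow]
  have hC : ∀ z : ℤ, Algebra.trace (ZMod p) F (a * α ^ ((N₁ : ℤ) * z)) = 0 := by
    intro z
    obtain ⟨u, v, huv⟩ : ∃ u v : ℤ, (N₁ : ℤ) = N * u + t * v :=
      ⟨Nat.gcdA N t, Nat.gcdB N t, by rw [hgcd]; exact Nat.gcd_eq_gcd_ab N t⟩
    have hexp : α ^ ((N₁ : ℤ) * z) = ((α ^ N : F) ^ (u * z)) * ((α ^ t : F) ^ (v * z)) := by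
      rw [huv]
      rw [show ((N : ℤ) * u + t * v) * z = (N : ℤ) * (u * z) + (t : ℤ) * (v * z) by ring]
      rw [zpow_add₀ hα0, zpow_mul α (N:ℤ) (u*z), zpow_mul α (t:ℤ) (v*z), zpow_natCast α N, zpow_natCast α t]
    have hsc : (α ^ t : F) ^ (v * z) = algebraMap (ZMod p) F (c₀ ^ (v * z)) := by
      rw [← hc₀, ← map_zpow₀]
    have hθz : ((α ^ N : F) ^ (u * z)) = (α ^ N) ^ ((u * z) % ((Q : ℤ) - 1)).toNat := by
      have := zpow_eq_pow_toNat (x := α ^ N) (e := Q - 1) (by omega) hθQ (u * z)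
      rwa [Nat.cast_sub (by omega : 1 ≤ Q), Nat.cast_one] at this
    rw [hexp, hsc, hθz]
    have : a * ((α ^ N) ^ ((u * z) % ((Q : ℤ) - 1)).toNat * algebraMap (ZMod p) F (c₀ ^ (v * z)))
        = (c₀ ^ (v * z)) • (a * (α ^ N) ^ ((u * z) % ((Q : ℤ) - 1)).toNat) := by
      rw [Algebra.smul_def]; ring
    rw [this, map_smul, hB, smul_zero]
  -- the span V of S = {α^(N₁ z)}
  set S : Set F := Set.range (fun z : ℤ => α ^ ((N₁ : ℤ) * z)) with hS
  set V : Submodule (ZMod p) F := Submodule.span (ZMod p) S with hV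
  have hVtr : ∀ x ∈ V, Algebra.trace (ZMod p) F (a * x) = 0 := by
    intro x hx
    induction hx using Submodule.span_induction with
    | mem x hxS => obtain ⟨z, rfl⟩ := hxS; exact hC z
    | zero => simp
    | add x y hx hy ihx ihy => rw [mul_add, map_add, ihx, ihy, add_zero]
    | smul r x hx ihx => rw [mul_smul_comm, map_smul, ihx, smul_zero]
  have hSS : S * S ⊆ S := by
    rintro w hw
    rw [Set.mem_mul] at hw
    obtain ⟨x, hx, y, hy, rfl⟩ := hw
    obtain ⟨z₁, rfl⟩ := hx
    obtain ⟨z₂, rfl⟩ := hy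
    exact ⟨z₁ + z₂, by show α ^ ((N₁:ℤ) * (z₁ + z₂)) = _; rw [mul_add, zpow_add₀ hα0]⟩
  have hVmul : ∀ x ∈ V, ∀ y ∈ V, x * y ∈ V := by
    intro x hx y hy
    have hle : V * V ≤ V := by
      rw [hV, Submodule.span_mul_span]
      exact Submodule.span_le.mpr (hSS.trans Submodule.subset_span)
    exact hle (Submodule.mul_mem_mul hx hy)
  have h1S : (1 : F) ∈ S := ⟨0, by simp⟩
  have h1V : (1 : F) ∈ V := Submodule.subset_span h1S
  have hVpow : ∀ x ∈ V, ∀ n : ℕ, x ^ n ∈ V := by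
    intro x hx n
    induction n with
    | zero => simpa using h1V
    | succ n ih => rw [pow_succ]; exact hVmul _ ih _ hx
  letI : Fintype V := Fintype.ofFinite _
  set d := Module.finrank (ZMod p) V with hd
  have hcardV : Fintype.card V = p ^ d := by
    have h := Module.card_eq_pow_finrank (K := ZMod p) (V := V)
    rwa [ZMod.card] at h
  -- d ≥ 1
  haveI : Nontrivial V := ⟨⟨⟨0, zero_mem V⟩, ⟨1, h1V⟩, by simp [Subtype.ext_iff]⟩⟩
  have hd1 : 1 ≤ d := by
    by_contra h
    have hd0 : d = 0 := by omega
    have hcV : Fintype.card V = 1 := by rw [hcardV, hd0, pow_zero]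
    have := Fintype.one_lt_card (α := V)
    omega
  -- the nonzero elements of V form a subgroup of Fˣ
  set H : Subgroup Fˣ := {
    carrier := {u : Fˣ | (u : F) ∈ V}
    mul_mem' := fun {x y} hx hy => by
      show ((x * y : Fˣ) : F) ∈ V
      rw [Units.val_mul]
      exact hVmul _ hx _ hy
    one_mem' := by
      show ((1 : Fˣ) : F) ∈ V
      rw [Units.val_one]
      exact h1V
    inv_mem' := fun {u} hu => by
      show ((u⁻¹ : Fˣ) : F) ∈ V
      have hord : 0 < orderOf u := orderOf_pos u
      have hio : u⁻¹ = u ^ (orderOf u - 1) := by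
        have : u ^ (orderOf u - 1) * u = 1 := by
          rw [← pow_succ]
          have : orderOf u - 1 + 1 = orderOf u := by omega
          rw [this, pow_orderOf_eq_one]
        exact (eq_inv_of_mul_eq_one_left this).symm
      rw [hio, Units.val_pow_eq_pow_val]
      exact hVpow _ hu _ } with hH
  have hcard_ne : Fintype.card {v : V // v ≠ 0} = p ^ d - 1 := by
    have h := Fintype.card_subtype_compl (α := ↥V) (fun v => v = 0)
    rw [Fintype.card_subtype_eq, hcardV] at h
    exact h
  have hHcard : Fintype.card H = p ^ d - 1 := by
    rw [← hcard_ne]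
    apply Fintype.card_congr
    exact {
      toFun := fun u => ⟨⟨((u : Fˣ) : F), u.2⟩,
        fun hzero => Units.ne_zero (u : Fˣ) (Subtype.ext_iff.mp hzero)⟩
      invFun := fun v => ⟨Units.mk0 ((v : V) : F) (fun h => v.2 (Subtype.ext h)),
        (v.1).2⟩
      left_inv := fun u => by
        ext
        simp
      right_inv := fun v => by
        ext
        simp }
  -- Lagrange : p^d - 1 divides Q - 1
  have hdvd : p ^ d - 1 ∣ Q - 1 := by
    have h' := Subgroup.card_subgroup_dvd_card H
    simp only [Nat.card_eq_fintype_card] at h'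
    rwa [hHcard, Fintype.card_units, hQcard] at h'
  have hdm : d ∣ m := dvd_of_pow_sub_one_dvd hp2 hd1 hdvd
  -- counting : (Q-1)/N₁ many distinct nonzero elements of V
  set k := (Q - 1) / N₁ with hk
  have hkN : N₁ * k = Q - 1 := Nat.mul_div_cancel' hN₁dvdQ
  have hmemV : ∀ i : ℕ, α ^ (N₁ * i) ∈ V := by
    intro i
    apply Submodule.subset_span
    exact ⟨(i : ℤ), by
      show α ^ ((N₁ : ℤ) * (i : ℤ)) = _
      rw [← Nat.cast_mul, zpow_natCast]⟩
  have hcount : k ≤ p ^ d - 1 := by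
    have hle : Fintype.card (Fin k) ≤ Fintype.card {v : V // v ≠ 0} := by
      apply Fintype.card_le_of_injective
        (fun i : Fin k => (⟨⟨α ^ (N₁ * (i : ℕ)), hmemV _⟩,
          fun hzero => pow_ne_zero _ hα0 (Subtype.ext_iff.mp hzero)⟩ : {v : V // v ≠ 0}))
      intro i j hij
      have hij' : α ^ (N₁ * (i : ℕ)) = α ^ (N₁ * (j : ℕ)) :=
        Subtype.ext_iff.mp (Subtype.ext_iff.mp hij)
      -- wlog i ≤ j
      have key : ∀ i j : Fin k, (i : ℕ) ≤ (j : ℕ) →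
        α ^ (N₁ * (i : ℕ)) = α ^ (N₁ * (j : ℕ)) → (i : ℕ) = (j : ℕ) := by
        intro i j hle he
        by_contra hne
        have hexp : N₁ * (i : ℕ) + N₁ * ((j : ℕ) - (i : ℕ)) = N₁ * (j : ℕ) := by
          rw [← Nat.mul_add]
          congr 1
          omega
        have h2 : α ^ (N₁ * (i : ℕ)) * α ^ (N₁ * ((j : ℕ) - (i : ℕ))) = α ^ (N₁ * (i : ℕ)) * 1 := by
          rw [← pow_add, hexp, mul_one, he]
        have h3 : α ^ (N₁ * ((j : ℕ) - (i : ℕ))) = 1 :=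
          mul_left_cancel₀ (pow_ne_zero _ hα0) h2
        have h4 : Q - 1 ∣ N₁ * ((j : ℕ) - (i : ℕ)) := hα ▸ orderOf_dvd_of_pow_eq_one h3
        have h5 : 0 < N₁ * ((j : ℕ) - (i : ℕ)) := by
          have : 0 < (j : ℕ) - (i : ℕ) := by omega
          positivity
        have h6 : N₁ * ((j : ℕ) - (i : ℕ)) < Q - 1 := by
          calc N₁ * ((j : ℕ) - (i : ℕ)) < N₁ * k := by
                have hjk : (j : ℕ) - (i : ℕ) < k := by have := j.2; omega
                exact Nat.mul_lt_mul_of_le_of_lt (le_refl N₁) hjk (by omega)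
          _ = Q - 1 := hkN
        have := Nat.le_of_dvd h5 h4
        omega
      rcases le_total (i : ℕ) (j : ℕ) with h | h
      · exact Fin.ext (key i j h hij')
      · exact Fin.ext (key j i h hij'.symm).symm
    rw [Fintype.card_fin, hcard_ne] at hle
    exact hle
  -- real arithmetic : d = m
  have hdm' : d = m := by
    by_contra hne
    have hdlem : d ≤ m := Nat.le_of_dvd (by omega) hdm
    have h2d : 2 * d ≤ m := by
      obtain ⟨c, hc⟩ := hdm
      have hc2 : 2 ≤ c := by
        rcases Nat.lt_or_ge c 2 with h | h
        · interval_cases c <;> omega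
        · exact h
      calc 2 * d ≤ c * d := Nat.mul_le_mul_right d hc2
      _ = m := by rw [hc]; ring
    set R := Real.sqrt ((p : ℝ) ^ m) with hR
    have hQr : ((p : ℝ) ^ m) = R ^ 2 := (Real.sq_sqrt (by positivity)).symm
    have hR0 : 0 ≤ R := Real.sqrt_nonneg _
    have hR1 : 1 < R := by
      rw [hR]
      rw [show ((p : ℝ) ^ m) = ((Q : ℕ) : ℝ) by push_cast [hQ]; ring]
      rw [Real.lt_sqrt (by norm_num)]
      norm_num
      exact_mod_cast (by omega : (1 : ℕ) < Q)
    have hpd : ((p : ℝ)) ^ d ≤ R := by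
      rw [hR, Real.le_sqrt (by positivity) (by positivity)]
      rw [← pow_mul]
      exact_mod_cast Nat.pow_le_pow_right (by omega : 1 ≤ p) (by omega)
    have hpd1 : (1 : ℝ) ≤ (p : ℝ) ^ d := one_le_pow₀ (by exact_mod_cast (by omega : 1 ≤ p))
    have hkr : ((Q : ℝ) - 1) = (N₁ : ℝ) * k := by
      have : ((N₁ * k : ℕ) : ℝ) = ((Q - 1 : ℕ) : ℝ) := by rw [hkN]
      push_cast [Nat.cast_sub (by omega : 1 ≤ Q)] at this
      linarith
    have hkr2 : (k : ℝ) ≤ (p : ℝ) ^ d - 1 := by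
      have : ((k : ℕ) : ℝ) ≤ ((p ^ d - 1 : ℕ) : ℝ) := by exact_mod_cast hcount
      rwa [Nat.cast_sub (Nat.one_le_pow _ _ (by omega)), Nat.cast_pow, Nat.cast_one] at this
    have hsq' : (N₁ : ℝ) ≤ R := hsq
    have hN₁0 : (0 : ℝ) ≤ N₁ := by positivity
    have hfinal : (Q : ℝ) - 1 ≤ R * (R - 1) := by
      calc (Q : ℝ) - 1 = (N₁ : ℝ) * k := hkr
      _ ≤ (N₁ : ℝ) * ((p : ℝ) ^ d - 1) := by
          apply mul_le_mul_of_nonneg_left hkr2 hN₁0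
      _ ≤ R * ((p : ℝ) ^ d - 1) := by
          apply mul_le_mul_of_nonneg_right hsq' (by linarith)
      _ ≤ R * (R - 1) := by
          apply mul_le_mul_of_nonneg_left (by linarith) hR0
    have hQR : (Q : ℝ) = R ^ 2 := by
      rw [← hQr, hQ]; push_cast; ring
    nlinarith [hR1, hQR, hfinal]
  -- hence V = ⊤ and the trace form would vanish
  have hfrF : Module.finrank (ZMod p) F = m := by
    have h := Module.card_eq_pow_finrank (K := ZMod p) (V := F)
    rw [hQcard, hQ, ZMod.card] at h
    exact (Nat.pow_right_injective hp2 h.symm)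
  have hVtop : V = ⊤ := by
    apply Submodule.eq_top_of_finrank_eq
    rw [hfrF, ← hd, hdm']
  have htr0 : Algebra.trace (ZMod p) F = 0 := by
    ext y
    have hy : a⁻¹ * y ∈ V := by rw [hVtop]; exact Submodule.mem_top
    have h := hVtr _ hy
    rwa [← mul_assoc, mul_inv_cancel₀ ha, one_mul] at h
  exact Algebra.trace_ne_zero (ZMod p) F htr0
end

section
/- Let q = p^m with p an odd prime, and suppose a ∈ C_i^{(N_1,q)} where N_1 = gcd(N, (q−1)/(p−1)) and D = {θ^i : 0 ≤ i < n_2} with θ = α^N, n_2 = lcm(N,(q−1)/(p−1))/N. Then the Hamming weight of the codeword c(a) = (Tr(a θ^j))_{0≤j<n_2} equals q/(p N_1) − (1/p)(η_i^{(N_1,q)} + 1/N_1). -/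
/-!
The elements `y θ^j` with `y ∈ F_p^*` and `0 ≤ j < n₂` run exactly once through
`C_0^{(N₁,q)}`: they lie in it because `F_p^* = ⟨α^s⟩` with `s = (q-1)/(p-1)` and
`N₁ = gcd(N, s)`; they are distinct because `(y θ^j)^(p-1) = θ^(j(p-1))` and `θ^(p-1)`
has order `s / N₁ = n₂`; and there are `n₂(p-1) = |C_0^{(N₁,q)}|` of them. Hence the double
sum `Σ_{j<n₂} Σ_{y∈F_p} ψ(y a θ^j)` equals `n₂ + η_i^{(N₁,q)}`, while by orthogonality of the
additive characters of `F_p` it is `p` times the number of zero coordinates of `c(a)`.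
-/

open scoped Classical

/-- The canonical additive character `ψ(x) = ζ_p^{Tr(x)}` of `F_q`. -/
noncomputable def psi (p : ℕ) {F : Type} [Field F] [Fintype F] [Algebra (ZMod p) F]
    (x : F) : ℂ :=
  Complex.exp (2 * Real.pi * Complex.I * ((Algebra.trace (ZMod p) F x).val : ℂ) / p)

/-- The Gauss period `η_i^{(e,q)} = Σ_{x ∈ C_i^{(e,q)}} ψ(x)`. -/
noncomputable def gp (p : ℕ) {F : Type} [Field F] [Fintype F] [Algebra (ZMod p) F]
    (α : F) (e i : ℕ) : ℂ :=
  ∑ x ∈ cyc α e i, psi p x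

open Finset

section AdditiveCharacter

variable (p : ℕ) [Fact p.Prime] {F : Type} [Field F] [Fintype F] [Algebra (ZMod p) F]

lemma psi_eq_stdAddChar_trace (x : F) :
    psi p x = ZMod.stdAddChar (Algebra.trace (ZMod p) F x) := by
  rw [psi, ZMod.stdAddChar_apply, ZMod.toCircle_apply]

lemma sum_psi_algebraMap_mul (x : F) :
    ∑ y : ZMod p, psi p (algebraMap (ZMod p) F y * x)
      = if Algebra.trace (ZMod p) F x = 0 then (p : ℂ) else 0 := by
  simp only [psi_eq_stdAddChar_trace, ← Algebra.smul_def, map_smul, smul_eq_mul]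
  rw [AddChar.sum_mulShift _ (ZMod.isPrimitive_stdAddChar p), ZMod.card, Nat.cast_ite,
    Nat.cast_zero]

lemma natCast_mul_card_filter_trace_eq_zero {ι : Type*} (s : Finset ι) (v : ι → F) :
    (p : ℂ) * #{j ∈ s | Algebra.trace (ZMod p) F (v j) = 0}
      = #s + ∑ j ∈ s, ∑ y ∈ univ.erase 0, psi p (algebraMap (ZMod p) F y * v j) := by
  have hsplit : ∀ j, ∑ y : ZMod p, psi p (algebraMap (ZMod p) F y * v j)
      = 1 + ∑ y ∈ univ.erase 0, psi p (algebraMap (ZMod p) F y * v j) := fun j => by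
    rw [← add_sum_erase _ _ (mem_univ 0)]
    simp [psi]
  calc (p : ℂ) * #{j ∈ s | Algebra.trace (ZMod p) F (v j) = 0}
      = ∑ j ∈ s, ∑ y : ZMod p, psi p (algebraMap (ZMod p) F y * v j) := by
        simp only [sum_psi_algebraMap_mul, sum_ite, sum_const, nsmul_eq_mul]
        ring
    _ = #s + ∑ j ∈ s, ∑ y ∈ univ.erase 0, psi p (algebraMap (ZMod p) F y * v j) := by
        simp only [hsplit, sum_add_distrib, sum_const, nsmul_eq_mul, mul_one]

end AdditiveCharacter

lemma Fintype.card_sub_one_pos {α : Type*} [Fintype α] [Nontrivial α] :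
    0 < Fintype.card α - 1 :=
  Nat.sub_pos_of_lt Fintype.one_lt_card

section CyclotomicClasses

variable {F : Type} [Field F] [Fintype F] {α : F}

lemma isPrimitiveRoot_pow_of_dvd_card_sub_one (hα : IsPrimitiveRoot α (Fintype.card F - 1))
    {e : ℕ} (he : e ∣ Fintype.card F - 1) :
    IsPrimitiveRoot (α ^ e) ((Fintype.card F - 1) / e) :=
  hα.pow_of_dvd (Nat.pos_of_dvd_of_pos he Fintype.card_sub_one_pos).ne' he

lemma card_cyc (hα : IsPrimitiveRoot α (Fintype.card F - 1)) {e : ℕ}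
    (he : e ∣ Fintype.card F - 1) (i : ℕ) : #(cyc α e i) = (Fintype.card F - 1) / e := by
  have hα0 : α ≠ 0 := hα.ne_zero Fintype.card_sub_one_pos.ne'
  rw [cyc, card_image_of_injOn, card_range]
  intro u hu v hv huv
  exact (isPrimitiveRoot_pow_of_dvd_card_sub_one hα he).pow_inj (mem_range.mp hu)
    (mem_range.mp hv) (mul_left_cancel₀ (pow_ne_zero i hα0) huv)

lemma mul_pow_mem_cyc (hα : IsPrimitiveRoot α (Fintype.card F - 1)) {e i : ℕ}
    (he : e ∣ Fintype.card F - 1) {a : F} (ha : a ∈ cyc α e i) (k : ℕ) :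
    a * (α ^ e) ^ k ∈ cyc α e i := by
  have hQ := Fintype.card_sub_one_pos (α := F)
  have hpos : 0 < (Fintype.card F - 1) / e :=
    Nat.div_pos (Nat.le_of_dvd hQ he) (Nat.pos_of_dvd_of_pos he hQ)
  obtain ⟨j, -, rfl⟩ := mem_image.mp ha
  refine mem_image.mpr
    ⟨(j + k) % ((Fintype.card F - 1) / e), mem_range.mpr (Nat.mod_lt _ hpos), ?_⟩
  rw [(isPrimitiveRoot_pow_of_dvd_card_sub_one hα he).eq_orderOf, pow_mod_orderOf, pow_add,
    mul_assoc]

lemma ne_zero_of_mem_cyc (hα : IsPrimitiveRoot α (Fintype.card F - 1)) {e i : ℕ} {a : F}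
    (ha : a ∈ cyc α e i) : a ≠ 0 := by
  have hα0 : α ≠ 0 := hα.ne_zero Fintype.card_sub_one_pos.ne'
  obtain ⟨j, -, rfl⟩ := mem_image.mp ha
  exact mul_ne_zero (pow_ne_zero _ hα0) (pow_ne_zero _ (pow_ne_zero _ hα0))

end CyclotomicClasses

lemma Nat.lcm_div_left_eq_div_gcd {m : ℕ} (n : ℕ) (hm : 0 < m) :
    Nat.lcm m n / m = n / Nat.gcd m n := by
  rw [Nat.lcm, Nat.mul_div_assoc m (Nat.gcd_dvd_right m n), Nat.mul_div_cancel_left _ hm]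

lemma IsPrimitiveRoot.pow_pow_div_gcd {M : Type*} [CommMonoid M] {ζ : M} {s d : ℕ}
    (h : IsPrimitiveRoot ζ (s * d)) (hs : 0 < s) (hd : 0 < d) (N : ℕ) :
    IsPrimitiveRoot ((ζ ^ N) ^ d) (s / Nat.gcd N s) := by
  rw [IsPrimitiveRoot.iff_orderOf, ← pow_mul,
    (h.isOfFinOrder (Nat.mul_pos hs hd).ne').orderOf_pow, ← h.eq_orderOf, Nat.gcd_mul_right,
    Nat.mul_div_mul_right _ _ hd, Nat.gcd_comm]

section CosetRepresentatives

variable {p : ℕ} [Fact p.Prime] {F : Type} [Field F] [Fintype F] [Algebra (ZMod p) F]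
  {α : F} (hα : IsPrimitiveRoot α (Fintype.card F - 1))
  {s : ℕ} (hs : s * (p - 1) = Fintype.card F - 1)
include hα hs

lemma exists_algebraMap_eq_pow {y : ZMod p} (hy : y ≠ 0) :
    ∃ c, algebraMap (ZMod p) F y = (α ^ s) ^ c := by
  have : NeZero (p - 1) := ⟨Nat.sub_ne_zero_of_lt (Fact.out : p.Prime).one_lt⟩
  have hαs : IsPrimitiveRoot (α ^ s) (p - 1) := hα.pow Fintype.card_sub_one_pos hs.symm
  obtain ⟨c, -, hc⟩ := hαs.eq_pow_of_pow_eq_one (ξ := algebraMap (ZMod p) F y)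
    (by rw [← map_pow, ZMod.pow_card_sub_one_eq_one hy, map_one])
  exact ⟨c, hc.symm⟩

lemma exists_algebraMap_mul_pow_eq_pow_gcd {y : ZMod p} (hy : y ≠ 0) (N j : ℕ) :
    ∃ k, algebraMap (ZMod p) F y * (α ^ N) ^ j = (α ^ Nat.gcd N s) ^ k := by
  obtain ⟨c, hc⟩ := exists_algebraMap_eq_pow hα hs hy
  set g := Nat.gcd N s
  obtain ⟨N', hN'⟩ : g ∣ N := Nat.gcd_dvd_left N s
  obtain ⟨s', hs'⟩ : g ∣ s := Nat.gcd_dvd_right N s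
  refine ⟨s' * c + N' * j, ?_⟩
  rw [hc, ← pow_mul, ← pow_mul, ← pow_add, ← pow_mul, hs', hN']
  ring_nf

lemma injOn_algebraMap_mul_mul_pow {a : F} (ha : a ≠ 0) (N : ℕ) :
    Set.InjOn (fun jy : ℕ × ZMod p => algebraMap (ZMod p) F jy.2 * (a * (α ^ N) ^ jy.1))
      (range (s / Nat.gcd N s) ×ˢ univ.erase 0 : Finset (ℕ × ZMod p)) := by
  rintro ⟨j, y⟩ hjy ⟨j', y'⟩ hjy' heq
  simp only [coe_product, Set.mem_prod, mem_coe, mem_range, mem_erase] at hjy hjy'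
  obtain ⟨hj, hy, -⟩ := hjy
  obtain ⟨hj', hy', -⟩ := hjy'
  have hp : 0 < p - 1 := Nat.sub_pos_of_lt (Fact.out : p.Prime).one_lt
  have hs0 : 0 < s := Nat.pos_of_mul_pos_right (hs.symm ▸ Fintype.card_sub_one_pos)
  have hθ := (hs ▸ hα).pow_pow_div_gcd hs0 hp N
  have hpow : ∀ {y : ZMod p}, y ≠ 0 → (algebraMap (ZMod p) F y) ^ (p - 1) = 1 := fun hy => by
    rw [← map_pow, ZMod.pow_card_sub_one_eq_one hy, map_one]
  have hj : j = j' := by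
    refine hθ.pow_inj hj hj' (mul_left_cancel₀ (pow_ne_zero (p - 1) ha) ?_)
    have := congrArg (· ^ (p - 1)) heq
    simp only [mul_pow, hpow hy, hpow hy', one_mul] at this
    rwa [pow_right_comm _ j, pow_right_comm _ j'] at this
  subst hj
  have hne : a * (α ^ N) ^ j ≠ 0 :=
    mul_ne_zero ha (pow_ne_zero _ (pow_ne_zero _ (hα.ne_zero Fintype.card_sub_one_pos.ne')))
  exact Prod.ext rfl ((algebraMap (ZMod p) F).injective (mul_right_cancel₀ hne heq))

lemma image_algebraMap_mul_mul_pow_eq_cyc (N : ℕ) {i : ℕ} {a : F}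
    (ha : a ∈ cyc α (Nat.gcd N s) i) :
    (range (s / Nat.gcd N s) ×ˢ univ.erase 0).image
        (fun jy : ℕ × ZMod p => algebraMap (ZMod p) F jy.2 * (a * (α ^ N) ^ jy.1))
      = cyc α (Nat.gcd N s) i := by
  have hg : Nat.gcd N s ∣ Fintype.card F - 1 := hs ▸ (Nat.gcd_dvd_right N s).mul_right _
  refine eq_of_subset_of_card_le ?_ ?_
  · intro x hx
    obtain ⟨⟨j, y⟩, hjy, rfl⟩ := mem_image.mp hx
    have hy : y ≠ 0 := (mem_erase.mp (mem_product.mp hjy).2).1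
    obtain ⟨k, hk⟩ := exists_algebraMap_mul_pow_eq_pow_gcd hα hs hy N j
    rw [mul_left_comm, hk]
    exact mul_pow_mem_cyc hα hg ha k
  · rw [card_image_of_injOn (injOn_algebraMap_mul_mul_pow hα hs (ne_zero_of_mem_cyc hα ha) N),
      card_cyc hα hg, card_product, card_range, card_erase_of_mem (mem_univ _), card_univ,
      ZMod.card, Nat.div_mul_right_comm (Nat.gcd_dvd_right N s), hs]

lemma gp_gcd_eq_sum_range_sum (N : ℕ) {i : ℕ} {a : F} (ha : a ∈ cyc α (Nat.gcd N s) i) :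
    gp p α (Nat.gcd N s) i = ∑ j ∈ range (s / Nat.gcd N s), ∑ y ∈ univ.erase 0,
      psi p (algebraMap (ZMod p) F y * (a * (α ^ N) ^ j)) := by
  rw [gp, ← image_algebraMap_mul_mul_pow_eq_cyc hα hs N ha,
    sum_image (injOn_algebraMap_mul_mul_pow hα hs (ne_zero_of_mem_cyc hα ha) N), sum_product]

end CosetRepresentatives

theorem stmt10_general (p m N : ℕ) [Fact p.Prime]
    (F : Type) [Field F] [Fintype F] [Algebra (ZMod p) F]
    (hq : Fintype.card F = p ^ m)
    (α : F) (hα : orderOf α = p ^ m - 1)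
    (hN0 : 0 < N)
    (N₁ N₂ n₂ : ℕ)
    (hN₁ : N₁ = Nat.gcd N ((p ^ m - 1) / (p - 1)))
    (hN₂ : N₂ = Nat.lcm N ((p ^ m - 1) / (p - 1)))
    (hn₂ : n₂ = N₂ / N)
    (i : ℕ) (a : F) (ha : a ∈ cyc α N₁ i) :
    (((Finset.range n₂).filter
        (fun j => Algebra.trace (ZMod p) F (a * (α ^ N) ^ j) ≠ 0)).card : ℂ)
      = (p : ℂ) ^ m / (p * N₁) - (1 / p) * (gp p α N₁ i + 1 / N₁) := by
  set s := (p ^ m - 1) / (p - 1)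
  have hp := (Fact.out : p.Prime).pos
  have hs : s * (p - 1) = Fintype.card F - 1 :=
    hq ▸ Nat.div_mul_cancel (by simpa using Nat.sub_dvd_pow_sub_pow p 1 m)
  have hα' : IsPrimitiveRoot α (Fintype.card F - 1) := hq ▸ hα ▸ IsPrimitiveRoot.orderOf α
  have hn₂' : n₂ = s / N₁ := by rw [hn₂, hN₂, hN₁, Nat.lcm_div_left_eq_div_gcd _ hN0]
  set t : ℕ → ZMod p := fun j => Algebra.trace (ZMod p) F (a * (α ^ N) ^ j)
  have hzeros : (p : ℂ) * #{j ∈ range n₂ | t j = 0} = n₂ + gp p α N₁ i := by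
    rw [natCast_mul_card_filter_trace_eq_zero, card_range, hn₂', hN₁,
      gp_gcd_eq_sum_range_sum hα' hs N (hN₁ ▸ ha)]
  have hweight : (#{j ∈ range n₂ | t j = 0} : ℂ) + #{j ∈ range n₂ | t j ≠ 0} = n₂ := by
    exact_mod_cast (card_filter_add_card_filter_not _).trans (card_range n₂)
  have hcount : (n₂ : ℂ) * N₁ * (p - 1) = p ^ m - 1 := by
    have h : n₂ * N₁ * (p - 1) = p ^ m - 1 := by
      rw [hn₂', Nat.div_mul_cancel (hN₁ ▸ Nat.gcd_dvd_right N s), hs, hq]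
    replace h := congrArg (Nat.cast : ℕ → ℂ) h
    push_cast [Nat.cast_sub hp, Nat.cast_sub (Nat.one_le_pow m p hp)] at h
    exact h
  have hN₁0 : (N₁ : ℂ) ≠ 0 := Nat.cast_ne_zero.mpr (hN₁ ▸ Nat.gcd_pos_of_pos_left s hN0).ne'
  have hp0 : (p : ℂ) ≠ 0 := Nat.cast_ne_zero.mpr hp.ne'
  field_simp
  linear_combination ((p : ℂ) * N₁) * hweight - (N₁ : ℂ) * hzeros + hcount

/-- The Hamming weight of the codeword `c(a) = (Tr(a θ^j))_{0 ≤ j < n₂}`, for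
`a ∈ C_i^{(N₁,q)}`, equals `q/(pN₁) - (1/p)(η_i^{(N₁,q)} + 1/N₁)`. -/
theorem stmt10 (p m N : ℕ) [Fact p.Prime] (hp : Odd p)
    (F : Type) [Field F] [Fintype F] [Algebra (ZMod p) F]
    (hq : Fintype.card F = p ^ m)
    (α : F) (hα : orderOf α = p ^ m - 1)
    (hN : N ∣ p ^ m - 1) (hN0 : 0 < N)
    (N₁ N₂ n₂ : ℕ)
    (hN₁ : N₁ = Nat.gcd N ((p ^ m - 1) / (p - 1)))
    (hN₂ : N₂ = Nat.lcm N ((p ^ m - 1) / (p - 1)))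
    (hn₂ : n₂ = N₂ / N)
    (i : ℕ) (hi : i < N₁) (a : F) (ha : a ∈ cyc α N₁ i) :
    (((Finset.range n₂).filter
        (fun j => Algebra.trace (ZMod p) F (a * (α ^ N) ^ j) ≠ 0)).card : ℂ)
      = (p : ℂ) ^ m / (p * N₁) - (1 / p) * (gp p α N₁ i + 1 / N₁) :=
  stmt10_general p m N F hq α hα hN0 N₁ N₂ n₂ hN₁ hN₂ hn₂ i a ha
end

section
/- Let q = p^m with p an odd prime, D a skew set of F_q, and H an r-dimensional F_p-subspace of F_q (1 ≤ r ≤ m). Then the number of elements d ∈ D such that Tr(a d) = 0 for all a ∈ H equals (q − p^r)/(2 p^r). -/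
open scoped Classical

/-- `D ⊆ F_q^*` is a skew set if `D`, `-D` and `{0}` partition `F_q`. -/
def IsSkewSet {F : Type} [Field F] (D : Set F) : Prop :=
  (0 : F) ∉ D ∧ (∀ d ∈ D, -d ∉ D) ∧ ∀ x : F, x ≠ 0 → x ∈ D ∨ -x ∈ D

/-!
The condition `Tr(ad) = 0` for all `a ∈ H` says that `d` lies in the orthogonal complement `K`
of `H` for the trace form. The trace form of a finite field extension is nondegenerate, so
`|H| |K| = q`. Since `K` is an additive subgroup, `K \ {0}` is the disjoint union of `D ∩ K` and
`-(D ∩ K)`, hence `2 |D ∩ K| + 1 = |K| = q / p^r`.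
-/

open Finset

theorem LinearMap.BilinForm.Nondegenerate.natCard_mul_natCard_orthogonal {K V : Type*}
    [Field K] [AddCommGroup V] [Module K V] [FiniteDimensional K V]
    {B : LinearMap.BilinForm K V} (hB : B.Nondegenerate) (W : Submodule K V) :
    Nat.card W * Nat.card (B.orthogonal W) = Nat.card V := by
  rw [Module.natCard_eq_pow_finrank (K := K) (V := W),
    Module.natCard_eq_pow_finrank (K := K) (V := B.orthogonal W),
    Module.natCard_eq_pow_finrank (K := K) (V := V), ← pow_add,
    LinearMap.BilinForm.finrank_add_finrank_orthogonal', hB.ker_eq_bot, inf_bot_eq, finrank_bot,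
    add_zero]

theorem Algebra.mem_traceForm_orthogonal_iff {R S : Type*} [CommRing R] [CommRing S]
    [Algebra R S] {H : Submodule R S} {x : S} :
    x ∈ (Algebra.traceForm R S).orthogonal H ↔ ∀ a ∈ H, Algebra.trace R S (a * x) = 0 :=
  Iff.rfl

theorem IsSkewSet.two_mul_card_filter_mem_add_one {F : Type} [Field F] [Fintype F]
    {S : Type*} [SetLike S F] [AddSubgroupClass S F]
    {D : Finset F} (hD : IsSkewSet (D : Set F)) (K : S) :
    2 * #(D.filter (· ∈ K)) + 1 = Nat.card K := by
  obtain ⟨hD0, hDneg, hDcover⟩ := hD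
  simp only [mem_coe] at hD0 hDneg hDcover
  set DK := D.filter (· ∈ K)
  have hsplit : univ.filter (· ∈ K) = insert 0 (DK ∪ DK.map (Equiv.neg F).toEmbedding) := by
    ext x
    simp only [DK, mem_filter, mem_univ, true_and, mem_insert, mem_union, mem_map_equiv,
      Equiv.neg_symm, Equiv.neg_apply]
    by_cases hx : x = 0
    · simp [hx, zero_mem]
    · rcases hDcover x hx with h | h
      · simp [h, hx]
      · simp [h, hx, neg_mem_iff]
  have h0 : (0 : F) ∉ DK ∪ DK.map (Equiv.neg F).toEmbedding := by
    simpa [DK] using hD0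
  have hdisj : Disjoint DK (DK.map (Equiv.neg F).toEmbedding) := by
    simp only [DK, disjoint_left, mem_map_equiv, mem_filter, Equiv.neg_symm, Equiv.neg_apply]
    exact fun x hx hx' => hDneg x hx.1 (by simpa using hx'.1)
  rw [Nat.card_eq_fintype_card, Fintype.card_subtype, hsplit, card_insert_of_notMem h0,
    card_union_of_disjoint hdisj, card_map]
  ring

theorem stmt13_general (p m : ℕ) [Fact p.Prime]
    (F : Type) [Field F] [Fintype F] [Algebra (ZMod p) F]
    (hq : Fintype.card F = p ^ m)
    (D : Finset F) (hD : IsSkewSet (↑D : Set F))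
    (H : Submodule (ZMod p) F) (r : ℕ)
    (hH : Module.finrank (ZMod p) ↥H = r) :
    (D.filter (fun d => ∀ a ∈ H, Algebra.trace (ZMod p) F (a * d) = 0)).card
        * (2 * p ^ r)
      = p ^ m - p ^ r := by
  set K := (Algebra.traceForm (ZMod p) F).orthogonal H
  have hfilter : D.filter (fun d => ∀ a ∈ H, Algebra.trace (ZMod p) F (a * d) = 0) =
      D.filter (· ∈ K) :=
    filter_congr fun _ _ => Algebra.mem_traceForm_orthogonal_iff.symm
  have hcount := hD.two_mul_card_filter_mem_add_one K
  have hcard := (traceForm_nondegenerate (ZMod p) F).natCard_mul_natCard_orthogonal H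
  rw [Module.natCard_eq_pow_finrank (K := ZMod p) (V := H), Nat.card_zmod, hH,
    Nat.card_eq_fintype_card (α := F), hq] at hcard
  rw [hfilter]
  refine Nat.eq_sub_of_add_eq ?_
  rw [← hcard, ← hcount]
  ring

/-- For a skew set `D` and an `r`-dimensional `F_p`-subspace `H` of `F_q`, the number
of `d ∈ D` with `Tr(ad) = 0` for all `a ∈ H` equals `(q - p^r)/(2p^r)`. -/
theorem stmt13 (p m : ℕ) [Fact p.Prime] (hp : Odd p)
    (F : Type) [Field F] [Fintype F] [Algebra (ZMod p) F]
    (hq : Fintype.card F = p ^ m)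
    (D : Finset F) (hD : IsSkewSet (↑D : Set F))
    (H : Submodule (ZMod p) F) (r : ℕ) (hr1 : 1 ≤ r) (hrm : r ≤ m)
    (hH : Module.finrank (ZMod p) ↥H = r) :
    (D.filter (fun d => ∀ a ∈ H, Algebra.trace (ZMod p) F (a * d) = 0)).card
        * (2 * p ^ r)
      = p ^ m - p ^ r :=
  stmt13_general p m F hq D hD H r hH
end
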